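/- arXiv:2502.20783 — 7 statements merged into one kernel-verified Lean document; each statement's English description precedes it below -/
import Mathlib

section
/- Let g satisfy: continuously differentiable, strictly convex, g(0)=g'(0)=0, g'(w)→∞, and strictly log-concave (so g/g' is strictly increasing). Let w*(ν) be the unique maximizer of w - ν g(w), and let F(ν) := ν · g(α + max_{w≥0}(w - ν g(w))) for a fixed α > 0. Then the sign of F'(ν) equals the sign of α - g(w*(ν))/g'(w*(ν)); in particular F'(ν) = 0 iff g(w*(ν))/g'(w*(ν)) = α, F'(ν) > 0 iff g(w*(ν))/g'(w*(ν)) < α, and F'(ν) < 0 iff g(w*(ν))/g'(w*(ν)) > α. -/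
/-!
The first-order condition gives `g'(w*(ν)) = 1/ν`, so `g(w*)/g'(w*) = ν g(w*)`, and since `g'` is
strictly increasing, `w*` is continuous. The envelope theorem then gives `V'(ν) = -g(w*(ν))`,
hence with `a = α + V(ν)` and `r = g/g'`,
`F'(ν) = g(a) - g'(a) ν g(w*) = g'(a) (r(a) - r(w*))`.
As `r` is strictly increasing and `g'(a) > 0`, `F'(ν)` has the sign of `a - w* = α - ν g(w*)`.
-/

open Filter Set Topology

theorem StrictMonoOn.sign_sub {α β : Type*}
    [AddCommGroup α] [LinearOrder α] [IsOrderedAddMonoid α]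
    [AddCommGroup β] [LinearOrder β] [IsOrderedAddMonoid β] {f : α → β} {s : Set α}
    (hf : StrictMonoOn f s) {a b : α} (ha : a ∈ s) (hb : b ∈ s) :
    SignType.sign (f a - f b) = SignType.sign (a - b) := by
  rcases lt_trichotomy a b with hab | rfl | hab
  · rw [sign_neg (sub_neg.2 (hf ha hb hab)), sign_neg (sub_neg.2 hab)]
  · simp
  · rw [sign_pos (sub_pos.2 (hf hb ha hab)), sign_pos (sub_pos.2 hab)]

theorem sign_sub_mul_div_of_strictMonoOn {p q : ℝ → ℝ} {s : Set ℝ}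
    (hpq : StrictMonoOn (fun x => p x / q x) s) {a b : ℝ} (ha : a ∈ s) (hb : b ∈ s)
    (hqa : 0 < q a) :
    SignType.sign (p a - q a * (p b / q b)) = SignType.sign (a - b) := by
  have hfactor : p a - q a * (p b / q b) = q a * (p a / q a - p b / q b) := by
    field_simp
  rw [hfactor, sign_mul, sign_pos hqa, one_mul, hpq.sign_sub ha hb]

theorem StrictMonoOn.tendsto_of_tendsto_comp {α β ι : Type*}
    [TopologicalSpace α] [LinearOrder α] [OrderTopology α]
    [DenselyOrdered α] [NoMinOrder α] [NoMaxOrder α]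
    [TopologicalSpace β] [LinearOrder β] [OrderTopology β]
    {f : α → β} {s : Set α} (hf : StrictMonoOn f s) {x : α} (hs : s ∈ 𝓝 x)
    {l : Filter ι} {u : ι → α} (hu : ∀ᶠ i in l, u i ∈ s)
    (hfu : Tendsto (f ∘ u) l (𝓝 (f x))) :
    Tendsto u l (𝓝 x) := by
  refine tendsto_order.2 ⟨fun a ha => ?_, fun a ha => ?_⟩
  · obtain ⟨c, hcx, hcs⟩ := exists_Ioc_subset_of_mem_nhds hs (exists_lt x)
    obtain ⟨b, hab, hbx⟩ := exists_between (max_lt ha hcx)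
    have hb : b ∈ s := hcs ⟨(le_max_right a c).trans_lt hab, hbx.le⟩
    filter_upwards [(tendsto_order.1 hfu).1 _ (hf hb (mem_of_mem_nhds hs) hbx), hu]
      with i hi hui
    exact ((le_max_left a c).trans_lt hab).trans ((hf.lt_iff_lt hb hui).1 hi)
  · obtain ⟨c, hxc, hcs⟩ := exists_Ico_subset_of_mem_nhds hs (exists_gt x)
    obtain ⟨b, hxb, hba⟩ := exists_between (lt_min ha hxc)
    have hb : b ∈ s := hcs ⟨hxb.le, hba.trans_le (min_le_right a c)⟩
    filter_upwards [(tendsto_order.1 hfu).2 _ (hf (mem_of_mem_nhds hs) hb hxb), hu]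
      with i hi hui
    exact ((hf.lt_iff_lt hui hb).1 hi).trans (hba.trans_le (min_le_left a c))

theorem hasDerivAt_of_isMaxOn_sub_mul {X : Type*} {s : Set X} (c h : X → ℝ) (x : ℝ → X)
    {ν : ℝ}
    (hmax : ∀ᶠ μ in 𝓝 ν, x μ ∈ s ∧ IsMaxOn (fun y => c y - μ * h y) s (x μ))
    (hcont : ContinuousAt (h ∘ x) ν) :
    HasDerivAt (fun μ => c (x μ) - μ * h (x μ)) (-h (x ν)) ν := by
  obtain ⟨hνs, hνmax⟩ := hmax.self_of_nhds
  have hsmall : (fun μ => (μ - ν) * (h (x ν) - h (x μ))) =o[𝓝 ν] fun μ => μ - ν := by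
    have hlim : Tendsto (fun μ => h (x ν) - h (x μ)) (𝓝 ν) (𝓝 0) := by
      simpa using hcont.tendsto.const_sub (h (x ν))
    simpa using (Asymptotics.isBigO_refl (fun μ => μ - ν) _).mul_isLittleO
      (Asymptotics.isLittleO_one_iff ℝ |>.2 hlim)
  rw [hasDerivAt_iff_isLittleO]
  refine (Asymptotics.IsBigO.of_bound' ?_).trans_isLittleO hsmall
  filter_upwards [hmax] with μ ⟨hμs, hμmax⟩
  have hlower : c (x ν) - μ * h (x ν) ≤ c (x μ) - μ * h (x μ) := hμmax hνs
  have hupper : c (x μ) - ν * h (x μ) ≤ c (x ν) - ν * h (x ν) := hνmax hμs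
  rw [Real.norm_eq_abs, Real.norm_eq_abs, smul_eq_mul]
  -- maximality at μ and at ν squeeze the remainder between 0 and `(μ-ν) (h (x ν) - h (x μ))`
  exact abs_le_abs_of_nonneg (by linarith) (by linarith)

section Optimizer

variable {g : ℝ → ℝ} {μ w : ℝ}

theorem pos_of_isMaxOn_sub_mul (hg : DifferentiableAt ℝ g 0) (hg0 : deriv g 0 = 0)
    (hw : 0 ≤ w) (hmax : IsMaxOn (fun x => x - μ * g x) (Ici 0) w) : 0 < w := by
  refine hw.lt_of_ne fun hw0 => ?_
  subst hw0
  have hderiv : HasDerivWithinAt (fun x => x - μ * g x) 1 (Ici 0) 0 := by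
    have h := (hasDerivAt_id' 0).sub (hg.hasDerivAt.const_mul μ)
    rw [hg0, mul_zero, sub_zero] at h
    exact h.hasDerivWithinAt
  have hcone : (1 : ℝ) ∈ posTangentConeAt (Ici 0) 0 :=
    mem_posTangentConeAt_of_segment_subset (by simp [segment_eq_Icc, Icc_subset_Ici_self])
  have := hmax.localize.hasFDerivWithinAt_nonpos hderiv.hasFDerivWithinAt hcone
  norm_num at this

theorem deriv_eq_inv_of_isMaxOn_sub_mul (hg : DifferentiableAt ℝ g w) (hw : 0 < w)
    (hmax : IsMaxOn (fun x => x - μ * g x) (Ici 0) w) : deriv g w = μ⁻¹ := by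
  have hcrit := (hmax.isLocalMax (Ici_mem_nhds hw)).hasDerivAt_eq_zero
    ((hasDerivAt_id' w).sub (hg.hasDerivAt.const_mul μ))
  exact eq_inv_of_mul_eq_one_right (by linarith)

theorem hasDerivAt_optimal_value (hg : Differentiable ℝ g)
    (hg' : StrictMonoOn (deriv g) (Ici 0)) (hg0 : deriv g 0 = 0) {wstar : ℝ → ℝ}
    (hmax : ∀ μ : ℝ, 0 < μ →
      0 ≤ wstar μ ∧ IsMaxOn (fun x => x - μ * g x) (Ici 0) (wstar μ))
    {ν : ℝ} (hν : 0 < ν) :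
    HasDerivAt (fun μ => wstar μ - μ * g (wstar μ)) (-g (wstar ν)) ν := by
  have hpos (μ : ℝ) (hμ : 0 < μ) : 0 < wstar μ :=
    pos_of_isMaxOn_sub_mul (hg 0) hg0 (hmax μ hμ).1 (hmax μ hμ).2
  have hfoc (μ : ℝ) (hμ : 0 < μ) : deriv g (wstar μ) = μ⁻¹ :=
    deriv_eq_inv_of_isMaxOn_sub_mul (hg _) (hpos μ hμ) (hmax μ hμ).2
  have hmax_near : ∀ᶠ μ in 𝓝 ν,
      wstar μ ∈ Ici 0 ∧ IsMaxOn (fun x => x - μ * g x) (Ici 0) (wstar μ) :=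
    (eventually_gt_nhds hν).mono fun μ hμ => hmax μ hμ
  have hwstar : ContinuousAt wstar ν := by
    refine hg'.tendsto_of_tendsto_comp (Ici_mem_nhds (hpos ν hν))
      (hmax_near.mono fun _ h => h.1) ?_
    rw [hfoc ν hν]
    refine (continuousAt_inv₀ hν.ne').tendsto.congr' ?_
    filter_upwards [eventually_gt_nhds hν] with μ hμ
    exact (hfoc μ hμ).symm
  exact hasDerivAt_of_isMaxOn_sub_mul id g wstar hmax_near
    (hg.continuous.continuousAt.comp hwstar)

end Optimizer

theorem stmt5_general (g : ℝ → ℝ) (hg : ContDiff ℝ 1 g)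
    (hsc : StrictConvexOn ℝ (Set.Ici (0 : ℝ)) g)
    (h0 : g 0 = 0) (h0' : deriv g 0 = 0)
    (hlog : StrictMonoOn (fun w => g w / deriv g w) (Set.Ioi 0))
    (α : ℝ) (hα : 0 < α)
    (wstar : ℝ → ℝ)
    (hmax : ∀ ν : ℝ, 0 < ν → 0 ≤ wstar ν ∧
      IsMaxOn (fun x => x - ν * g x) (Set.Ici 0) (wstar ν))
    (F : ℝ → ℝ)
    (hF : ∀ ν : ℝ, 0 < ν → F ν = ν * g (α + (wstar ν - ν * g (wstar ν)))) :
    ∀ ν : ℝ, 0 < ν →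
      (deriv F ν = 0 ↔ g (wstar ν) / deriv g (wstar ν) = α) ∧
      (0 < deriv F ν ↔ g (wstar ν) / deriv g (wstar ν) < α) ∧
      (deriv F ν < 0 ↔ α < g (wstar ν) / deriv g (wstar ν)) := by
  have hgd : Differentiable ℝ g := hg.differentiable one_ne_zero
  have hg' : StrictMonoOn (deriv g) (Ici 0) := hsc.strictMonoOn_deriv fun x _ => hgd x
  intro ν hν
  obtain ⟨hw0, hwmax⟩ := hmax ν hν
  have hwpos := pos_of_isMaxOn_sub_mul (hgd 0) h0' hw0 hwmax
  have hV := hasDerivAt_optimal_value hgd hg' h0' hmax hν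
  set w := wstar ν with hw
  set a := α + (w - ν * g w) with ha
  have ha_pos : 0 < a := by
    have hV0 : 0 - ν * g 0 ≤ w - ν * g w := hwmax self_mem_Ici
    rw [h0, mul_zero, sub_zero] at hV0
    linarith
  have hg'a : 0 < deriv g a := h0' ▸ hg' self_mem_Ici ha_pos.le ha_pos
  have hF' : HasDerivAt F (g a - deriv g a * (ν * g w)) ν := by
    have hG := (hasDerivAt_id' ν).mul ((hgd a).hasDerivAt.comp ν (hV.const_add α))
    refine (hG.congr_deriv ?_).congr_of_eventuallyEq ?_
    · simp only [Function.comp_apply, one_mul, ← hw, ← ha]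
      ring
    filter_upwards [eventually_gt_nhds hν] with μ hμ
    exact hF μ hμ
  have hratio : g w / deriv g w = ν * g w := by
    rw [deriv_eq_inv_of_isMaxOn_sub_mul (hgd w) hwpos hwmax]
    field_simp
  have hsign : SignType.sign (deriv F ν) = SignType.sign (α - g w / deriv g w) := by
    rw [hF'.deriv, ← hratio, sign_sub_mul_div_of_strictMonoOn hlog ha_pos hwpos hg'a, hratio, ha]
    congr 1
    ring
  refine ⟨?_, ?_, ?_⟩
  · rw [← sign_eq_zero_iff, hsign, sign_eq_zero_iff, sub_eq_zero, eq_comm]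
  · rw [← sign_eq_one_iff, hsign, sign_eq_one_iff, sub_pos]
  · rw [← sign_eq_neg_one_iff, hsign, sign_eq_neg_one_iff, sub_neg]

/-- Sign of the derivative of `F(ν) = ν · g(α + max_{w≥0}(w - ν g(w)))`:
it has the same sign as `α - g(w*(ν))/g'(w*(ν))`. -/
theorem stmt5 (g : ℝ → ℝ) (hg : ContDiff ℝ 1 g)
    (hsc : StrictConvexOn ℝ (Set.Ici (0 : ℝ)) g)
    (h0 : g 0 = 0) (h0' : deriv g 0 = 0)
    (hg'inf : Filter.Tendsto (deriv g) Filter.atTop Filter.atTop)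
    (hlog : StrictMonoOn (fun w => g w / deriv g w) (Set.Ioi 0))
    (α : ℝ) (hα : 0 < α)
    (wstar : ℝ → ℝ)
    (hmax : ∀ ν : ℝ, 0 < ν → 0 ≤ wstar ν ∧
      IsMaxOn (fun x => x - ν * g x) (Set.Ici 0) (wstar ν))
    (huniq : ∀ ν : ℝ, 0 < ν → ∀ w : ℝ, 0 ≤ w →
      IsMaxOn (fun x => x - ν * g x) (Set.Ici 0) w → w = wstar ν)
    (F : ℝ → ℝ)
    (hF : ∀ ν : ℝ, 0 < ν → F ν = ν * g (α + (wstar ν - ν * g (wstar ν)))) :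
    ∀ ν : ℝ, 0 < ν →
      (deriv F ν = 0 ↔ g (wstar ν) / deriv g (wstar ν) = α) ∧
      (0 < deriv F ν ↔ g (wstar ν) / deriv g (wstar ν) < α) ∧
      (deriv F ν < 0 ↔ α < g (wstar ν) / deriv g (wstar ν)) :=
  stmt5_general g hg hsc h0 h0' hlog α hα wstar hmax F hF
end

section
/- Let g be continuously differentiable, strictly convex, strictly log-concave, with g(0)=g'(0)=0, g'(w)→∞ as w→∞, and suppose lim_{w→∞} g(w - g(w)/g'(w))/g'(w) = ∞. Fix α > 0. Then the function F(ν) = ν · g(α + max_{w≥0}(w - ν g(w))) is U-shaped in ν on (0,∞) (strictly decreasing then strictly increasing), its minimum value over ν > 0 equals α exactly, and the minimum is attained at the unique ν solving g(w*(ν))/g'(w*(ν)) = α. -/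
/-!
The maximiser `w*(ν)` is the point where `g' = 1/ν`, so `w*` is a decreasing bijection of
`(0, ∞)` and, with `t = g / g'`, the quantity `ν g(w*(ν)) = t(w*(ν))` is strictly decreasing.
By the envelope theorem `M(ν) = w* - ν g(w*)` has derivative `-g(w*)`, so with
`a = α + M(ν) = w* + α - t(w*)` we get `F'(ν) = g(a) - g'(a) t(w*) = g'(a) (t(a) - t(w*))`,
which has the sign of `a - w* = α - t(w*(ν))` because `t` is increasing. Hence `F` decreases up
to the unique `ν₀` with `t(w*(ν₀)) = α` and increases afterwards; at `ν₀` we have `a = w*`, so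
`F(ν₀) = ν₀ g(w*) = α`. Such a `ν₀` exists because `t(w) < w` and `t → ∞`.
-/

open Set Filter Topology Asymptotics

theorem StrictConvexOn.add_deriv_mul_sub_lt {S : Set ℝ} {f : ℝ → ℝ} {x y : ℝ}
    (hf : StrictConvexOn ℝ S f) (hx : x ∈ S) (hy : y ∈ S) (hxy : x ≠ y)
    (hd : DifferentiableAt ℝ f x) : f x + deriv f x * (y - x) < f y := by
  rcases hxy.lt_or_gt with h | h
  · have := hf.deriv_lt_slope hx hy h hd
    rw [slope_def_field, lt_div_iff₀ (sub_pos.2 h)] at this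
    linarith
  · have := hf.slope_lt_deriv hy hx h hd
    rw [slope_def_field, div_lt_iff₀ (sub_pos.2 h)] at this
    linarith

/-- Envelope theorem for the value `x ↦ b x - x * a x` of the problems `max_y (b y - x * a y)`,
solved at parameter `x` by `y = x`. -/
theorem hasDerivAt_sub_mul_of_le {a b : ℝ → ℝ} {ν : ℝ}
    (hle : ∀ᶠ x in 𝓝 ν, b ν - x * a ν ≤ b x - x * a x)
    (hge : ∀ᶠ x in 𝓝 ν, b x - ν * a x ≤ b ν - ν * a ν) (ha : ContinuousAt a ν) :
    HasDerivAt (fun x => b x - x * a x) (-a ν) ν := by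
  rw [hasDerivAt_iff_isLittleO]
  have hsmall : (fun x => (a x - a ν) * (x - ν)) =o[𝓝 ν] fun x => x - ν := by
    have : (fun x => a x - a ν) =o[𝓝 ν] fun _ => (1 : ℝ) :=
      (isLittleO_one_iff ℝ).2 (by simpa using ha.tendsto.sub_const (a ν))
    simpa using this.mul_isBigO (isBigO_refl (fun x => x - ν) _)
  refine (IsBigO.of_bound' ?_).trans_isLittleO hsmall
  filter_upwards [hle, hge] with x h₁ h₂
  rw [smul_eq_mul, Real.norm_eq_abs, Real.norm_eq_abs,
    abs_of_nonneg (by linarith : 0 ≤ b x - x * a x - (b ν - ν * a ν) - (x - ν) * -a ν)]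
  exact le_trans (by linarith) (neg_le_abs _)

theorem strictAntiOn_Ioc_and_strictMonoOn_Ici_of_hasDerivAt {f f' : ℝ → ℝ} {a c : ℝ}
    (hac : a < c) (hf : ∀ x, a < x → HasDerivAt f (f' x) x)
    (hneg : ∀ x, a < x → x < c → f' x < 0) (hpos : ∀ x, c < x → 0 < f' x) :
    StrictAntiOn f (Ioc a c) ∧ StrictMonoOn f (Ici c) := by
  constructor
  · refine strictAntiOn_of_deriv_neg (convex_Ioc a c)
      (fun x hx => (hf x hx.1).continuousAt.continuousWithinAt) fun x hx => ?_
    rw [interior_Ioc] at hx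
    rw [(hf x hx.1).deriv]
    exact hneg x hx.1 hx.2
  · refine strictMonoOn_of_deriv_pos (convex_Ici c)
      (fun x hx => (hf x (hac.trans_le hx)).continuousAt.continuousWithinAt) fun x hx => ?_
    rw [interior_Ici] at hx
    rw [(hf x (hac.trans hx)).deriv]
    exact hpos x hx

section Convex

variable {g : ℝ → ℝ}

theorem deriv_pos_of_strictConvexOn (hsc : StrictConvexOn ℝ (Ici 0) g)
    (hd : Differentiable ℝ g) (h0' : deriv g 0 = 0) {w : ℝ} (hw : 0 < w) : 0 < deriv g w := by
  simpa [h0'] using hsc.strictMonoOn_deriv (fun x _ => hd x) self_mem_Ici hw.le hw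

theorem pos_of_strictConvexOn (hsc : StrictConvexOn ℝ (Ici 0) g) (hd : DifferentiableAt ℝ g 0)
    (h0 : g 0 = 0) (h0' : deriv g 0 = 0) {w : ℝ} (hw : 0 < w) : 0 < g w := by
  simpa [h0, h0'] using hsc.add_deriv_mul_sub_lt self_mem_Ici hw.le hw.ne hd

theorem div_deriv_lt_self (hsc : StrictConvexOn ℝ (Ici 0) g) (h0 : g 0 = 0) {w : ℝ}
    (hd : DifferentiableAt ℝ g w) (hw : 0 < w) (hdw : 0 < deriv g w) : g w / deriv g w < w := by
  have := hsc.add_deriv_mul_sub_lt hw.le self_mem_Ici hw.ne' hd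
  rw [div_lt_iff₀ hdw]
  linarith

theorem monotoneOn_of_strictConvexOn (hsc : StrictConvexOn ℝ (Ici 0) g)
    (hd : Differentiable ℝ g) (h0' : deriv g 0 = 0) : MonotoneOn g (Ici 0) :=
  monotoneOn_of_deriv_nonneg (convex_Ici 0) hd.continuous.continuousOn hd.differentiableOn
    fun _ hx => (deriv_pos_of_strictConvexOn hsc hd h0' (by simpa using hx)).le

/-- Since `g (w - g w / deriv g w) ≤ g w`, the growth condition forces `g / g' → ∞`. -/
theorem tendsto_div_deriv_atTop (hsc : StrictConvexOn ℝ (Ici 0) g) (hd : Differentiable ℝ g)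
    (h0 : g 0 = 0) (h0' : deriv g 0 = 0)
    (hsuff : Tendsto (fun w => g (w - g w / deriv g w) / deriv g w) atTop atTop) :
    Tendsto (fun w => g w / deriv g w) atTop atTop := by
  refine tendsto_atTop_mono' atTop ?_ hsuff
  filter_upwards [eventually_gt_atTop 0] with w hw
  have hdw := deriv_pos_of_strictConvexOn hsc hd h0' hw
  have hlt := div_deriv_lt_self hsc h0 (hd w) hw hdw
  have hpos := div_pos (pos_of_strictConvexOn hsc (hd 0) h0 h0' hw) hdw
  gcongr
  exact monotoneOn_of_strictConvexOn hsc hd h0' (sub_nonneg.2 hlt.le) hw.le (by linarith)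

theorem exists_pos_div_deriv_eq (hsc : StrictConvexOn ℝ (Ici 0) g) (hg : ContDiff ℝ 1 g)
    (h0 : g 0 = 0) (h0' : deriv g 0 = 0)
    (hsuff : Tendsto (fun w => g (w - g w / deriv g w) / deriv g w) atTop atTop)
    {α : ℝ} (hα : 0 < α) : ∃ w, 0 < w ∧ g w / deriv g w = α := by
  have hd := hg.differentiable one_ne_zero
  have hcont : ContinuousOn (fun w => g w / deriv g w) (Ioi 0) :=
    hg.continuous.continuousOn.div (hg.continuous_deriv le_rfl).continuousOn
      fun _ hw => (deriv_pos_of_strictConvexOn hsc hd h0' hw).ne'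
  exact isPreconnected_Ioi.intermediate_value_Ici hα (le_principal_iff.2 (Ioi_mem_atTop 0)) hcont
    (tendsto_div_deriv_atTop hsc hd h0 h0' hsuff)
    (div_deriv_lt_self hsc h0 (hd α) hα (deriv_pos_of_strictConvexOn hsc hd h0' hα)).le

theorem exists_pos_deriv_eq (hg : ContDiff ℝ 1 g) (h0' : deriv g 0 = 0)
    (hg'inf : Tendsto (deriv g) atTop atTop) {c : ℝ} (hc : 0 < c) :
    ∃ w, 0 < w ∧ deriv g w = c := by
  obtain ⟨w, hw, hwc⟩ := isPreconnected_Ici.intermediate_value_Ici self_mem_Ici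
    (le_principal_iff.2 (Ici_mem_atTop 0)) (hg.continuous_deriv le_rfl).continuousOn hg'inf
    (show deriv g 0 ≤ c by rw [h0']; exact hc.le)
  refine ⟨w, (mem_Ici.1 hw).lt_of_ne ?_, hwc⟩
  rintro rfl
  exact hc.ne (h0'.symm.trans hwc)

theorem sub_mul_lt_of_deriv_eq_inv (hsc : StrictConvexOn ℝ (Ici 0) g) {ν w x : ℝ}
    (hd : DifferentiableAt ℝ g w) (hν : 0 < ν) (hw : 0 ≤ w) (hx : 0 ≤ x) (hxw : x ≠ w)
    (hcrit : deriv g w = ν⁻¹) : x - ν * g x < w - ν * g w := by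
  have := mul_lt_mul_of_pos_left (hsc.add_deriv_mul_sub_lt hw hx hxw.symm hd) hν
  rw [hcrit, mul_add, ← mul_assoc, mul_inv_cancel₀ hν.ne', one_mul] at this
  linarith

theorem sub_mul_le_of_deriv_eq_inv (hsc : StrictConvexOn ℝ (Ici 0) g) {ν w x : ℝ}
    (hd : DifferentiableAt ℝ g w) (hν : 0 < ν) (hw : 0 ≤ w) (hx : 0 ≤ x)
    (hcrit : deriv g w = ν⁻¹) : x - ν * g x ≤ w - ν * g w := by
  rcases eq_or_ne x w with rfl | hxw
  · exact le_rfl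
  · exact (sub_mul_lt_of_deriv_eq_inv hsc hd hν hw hx hxw hcrit).le

theorem pos_and_deriv_eq_inv_of_isMaxOn (hsc : StrictConvexOn ℝ (Ici 0) g)
    (hg : ContDiff ℝ 1 g) (h0' : deriv g 0 = 0) (hg'inf : Tendsto (deriv g) atTop atTop)
    {ν w : ℝ} (hν : 0 < ν) (hw : 0 ≤ w) (hmax : IsMaxOn (fun x => x - ν * g x) (Ici 0) w) :
    0 < w ∧ deriv g w = ν⁻¹ := by
  obtain ⟨c, hc, hcν⟩ := exists_pos_deriv_eq hg h0' hg'inf (inv_pos.2 hν)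
  obtain rfl : w = c := by
    by_contra hne
    exact (sub_mul_lt_of_deriv_eq_inv hsc ((hg.differentiable one_ne_zero) c) hν hc.le hw hne
      hcν).not_ge (isMaxOn_iff.1 hmax c hc.le)
  exact ⟨hc, hcν⟩

theorem mul_eq_div_deriv_of_deriv_eq_inv {ν x : ℝ} (hcrit : deriv g x = ν⁻¹) :
    ν * g x = g x / deriv g x := by
  rw [hcrit, div_inv_eq_mul, mul_comm]

theorem sub_deriv_mul_div_deriv_pos_of_lt (hsc : StrictConvexOn ℝ (Ici 0) g)
    (hd : Differentiable ℝ g) (h0' : deriv g 0 = 0)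
    (hlog : StrictMonoOn (fun w => g w / deriv g w) (Ioi 0)) {ν x α : ℝ}
    (hx : 0 < x) (hcrit : deriv g x = ν⁻¹) (h : g x / deriv g x < α) :
    0 < g (α + (x - ν * g x)) - deriv g (α + (x - ν * g x)) * (g x / deriv g x) := by
  have ha : 0 < α + (x - g x / deriv g x) := by linarith
  rw [mul_eq_div_deriv_of_deriv_eq_inv hcrit, sub_pos,
    ← lt_div_iff₀' (deriv_pos_of_strictConvexOn hsc hd h0' ha)]
  exact hlog hx ha (by linarith)

theorem sub_deriv_mul_div_deriv_neg_of_lt (hsc : StrictConvexOn ℝ (Ici 0) g)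
    (hd : Differentiable ℝ g) (h0 : g 0 = 0) (h0' : deriv g 0 = 0)
    (hlog : StrictMonoOn (fun w => g w / deriv g w) (Ioi 0)) {ν x α : ℝ}
    (hx : 0 < x) (hcrit : deriv g x = ν⁻¹) (hα : 0 < α) (h : α < g x / deriv g x) :
    g (α + (x - ν * g x)) - deriv g (α + (x - ν * g x)) * (g x / deriv g x) < 0 := by
  have hlt := div_deriv_lt_self hsc h0 (hd x) hx (deriv_pos_of_strictConvexOn hsc hd h0' hx)
  have ha : 0 < α + (x - g x / deriv g x) := by linarith
  rw [mul_eq_div_deriv_of_deriv_eq_inv hcrit, sub_neg,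
    ← div_lt_iff₀' (deriv_pos_of_strictConvexOn hsc hd h0' ha)]
  exact hlog ha hx (by linarith)

end Convex

section CriticalPoint

variable {g w : ℝ → ℝ}

theorem strictAntiOn_of_deriv_eq_inv (hsc : StrictConvexOn ℝ (Ici 0) g)
    (hd : Differentiable ℝ g) (hcrit : ∀ ν, 0 < ν → 0 < w ν ∧ deriv g (w ν) = ν⁻¹) :
    StrictAntiOn w (Ioi 0) := fun ν hν μ hμ hνμ => by
  rw [← (hsc.strictMonoOn_deriv fun x _ => hd x).lt_iff_lt (hcrit μ hμ).1.le (hcrit ν hν).1.le,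
    (hcrit ν hν).2, (hcrit μ hμ).2]
  exact (inv_lt_inv₀ hμ hν).2 hνμ

theorem apply_inv_deriv_of_deriv_eq_inv (hsc : StrictConvexOn ℝ (Ici 0) g)
    (hd : Differentiable ℝ g) (h0' : deriv g 0 = 0)
    (hcrit : ∀ ν, 0 < ν → 0 < w ν ∧ deriv g (w ν) = ν⁻¹) {x : ℝ} (hx : 0 < x) :
    w (deriv g x)⁻¹ = x := by
  have hν := inv_pos.2 (deriv_pos_of_strictConvexOn hsc hd h0' hx)
  exact (hsc.strictMonoOn_deriv fun x _ => hd x).injOn (hcrit _ hν).1.le hx.le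
    (by rw [(hcrit _ hν).2, inv_inv])

theorem continuousAt_of_deriv_eq_inv (hsc : StrictConvexOn ℝ (Ici 0) g)
    (hd : Differentiable ℝ g) (h0' : deriv g 0 = 0)
    (hcrit : ∀ ν, 0 < ν → 0 < w ν ∧ deriv g (w ν) = ν⁻¹) {ν : ℝ} (hν : 0 < ν) :
    ContinuousAt w ν := by
  have himage : w '' Ioi 0 ∈ 𝓝 (w ν) :=
    mem_of_superset (Ioi_mem_nhds (hcrit ν hν).1) fun x hx =>
      ⟨_, inv_pos.2 (deriv_pos_of_strictConvexOn hsc hd h0' hx),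
        apply_inv_deriv_of_deriv_eq_inv hsc hd h0' hcrit hx⟩
  exact (strictAntiOn_of_deriv_eq_inv hsc hd hcrit).dual_right.continuousAt_of_image_mem_nhds
    (Ioi_mem_nhds hν) himage

theorem hasDerivAt_sub_mul_of_deriv_eq_inv (hsc : StrictConvexOn ℝ (Ici 0) g)
    (hd : Differentiable ℝ g) (h0' : deriv g 0 = 0)
    (hcrit : ∀ ν, 0 < ν → 0 < w ν ∧ deriv g (w ν) = ν⁻¹) {ν : ℝ} (hν : 0 < ν) :
    HasDerivAt (fun x => w x - x * g (w x)) (-g (w ν)) ν := by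
  have hle : ∀ x, 0 < x → ∀ y, 0 < y → w y - x * g (w y) ≤ w x - x * g (w x) :=
    fun x hx y hy => sub_mul_le_of_deriv_eq_inv hsc (hd _) hx (hcrit x hx).1.le
      (hcrit y hy).1.le (hcrit x hx).2
  refine hasDerivAt_sub_mul_of_le (a := fun x => g (w x))
    ((eventually_gt_nhds hν).mono fun x hx => hle x hx ν hν)
    ((eventually_gt_nhds hν).mono fun x hx => hle ν hν x hx)
    (hd.continuous.continuousAt.comp (continuousAt_of_deriv_eq_inv hsc hd h0' hcrit hν))

theorem hasDerivAt_of_eq_mul_apply_add {α : ℝ} {F : ℝ → ℝ} (hsc : StrictConvexOn ℝ (Ici 0) g)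
    (hd : Differentiable ℝ g) (h0' : deriv g 0 = 0)
    (hcrit : ∀ ν, 0 < ν → 0 < w ν ∧ deriv g (w ν) = ν⁻¹)
    (hF : ∀ ν, 0 < ν → F ν = ν * g (α + (w ν - ν * g (w ν)))) {ν : ℝ} (hν : 0 < ν) :
    HasDerivAt F (g (α + (w ν - ν * g (w ν)))
      - deriv g (α + (w ν - ν * g (w ν))) * (g (w ν) / deriv g (w ν))) ν := by
  have hM := (hasDerivAt_sub_mul_of_deriv_eq_inv hsc hd h0' hcrit hν).const_add α
  have := (hasDerivAt_id ν).mul ((hd _).hasDerivAt.comp ν hM)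
  refine (this.congr_of_eventuallyEq
    ((eventually_gt_nhds hν).mono fun x hx => hF x hx)).congr_deriv ?_
  rw [← mul_eq_div_deriv_of_deriv_eq_inv (hcrit ν hν).2]
  simp only [Function.comp_apply, id, one_mul]
  ring

end CriticalPoint

theorem stmt6_general (g : ℝ → ℝ) (hg : ContDiff ℝ 1 g)
    (hsc : StrictConvexOn ℝ (Set.Ici (0 : ℝ)) g)
    (h0 : g 0 = 0) (h0' : deriv g 0 = 0)
    (hg'inf : Filter.Tendsto (deriv g) Filter.atTop Filter.atTop)
    (hlog : StrictMonoOn (fun w => g w / deriv g w) (Set.Ioi 0))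
    (hsuff : Filter.Tendsto (fun w => g (w - g w / deriv g w) / deriv g w)
      Filter.atTop Filter.atTop)
    (α : ℝ) (hα : 0 < α)
    (wstar : ℝ → ℝ)
    (hmax : ∀ ν : ℝ, 0 < ν → 0 ≤ wstar ν ∧
      IsMaxOn (fun x => x - ν * g x) (Set.Ici 0) (wstar ν))
    (F : ℝ → ℝ)
    (hF : ∀ ν : ℝ, 0 < ν → F ν = ν * g (α + (wstar ν - ν * g (wstar ν)))) :
    ∃ ν₀ : ℝ, 0 < ν₀ ∧
      StrictAntiOn F (Set.Ioc 0 ν₀) ∧ StrictMonoOn F (Set.Ici ν₀) ∧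
      F ν₀ = α ∧ (∀ ν : ℝ, 0 < ν → α ≤ F ν) ∧
      g (wstar ν₀) / deriv g (wstar ν₀) = α ∧
      (∀ ν : ℝ, 0 < ν → g (wstar ν) / deriv g (wstar ν) = α → ν = ν₀) := by
  have hd : Differentiable ℝ g := hg.differentiable one_ne_zero
  have hcrit (ν : ℝ) (hν : 0 < ν) : 0 < wstar ν ∧ deriv g (wstar ν) = ν⁻¹ :=
    pos_and_deriv_eq_inv_of_isMaxOn hsc hg h0' hg'inf hν (hmax ν hν).1 (hmax ν hν).2
  have hτ : StrictAntiOn (fun ν => g (wstar ν) / deriv g (wstar ν)) (Ioi 0) :=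
    hlog.comp_strictAntiOn (strictAntiOn_of_deriv_eq_inv hsc hd hcrit) fun ν hν => (hcrit ν hν).1
  obtain ⟨w₀, hw₀, hw₀α⟩ := exists_pos_div_deriv_eq hsc hg h0 h0' hsuff hα
  set ν₀ := (deriv g w₀)⁻¹
  have hν₀ : 0 < ν₀ := inv_pos.2 (deriv_pos_of_strictConvexOn hsc hd h0' hw₀)
  have hτ₀ : g (wstar ν₀) / deriv g (wstar ν₀) = α := by
    rw [apply_inv_deriv_of_deriv_eq_inv hsc hd h0' hcrit hw₀, hw₀α]
  have hFν₀ : F ν₀ = α := by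
    rw [hF ν₀ hν₀, mul_eq_div_deriv_of_deriv_eq_inv (hcrit ν₀ hν₀).2, hτ₀, add_sub_cancel,
      mul_eq_div_deriv_of_deriv_eq_inv (hcrit ν₀ hν₀).2, hτ₀]
  obtain ⟨hanti, hmono⟩ := strictAntiOn_Ioc_and_strictMonoOn_Ici_of_hasDerivAt hν₀
    (fun ν hν => hasDerivAt_of_eq_mul_apply_add hsc hd h0' hcrit hF hν)
    (fun ν hν hνν₀ => sub_deriv_mul_div_deriv_neg_of_lt hsc hd h0 h0' hlog (hcrit ν hν).1
      (hcrit ν hν).2 hα (hτ₀ ▸ hτ hν hν₀ hνν₀))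
    fun ν hν₀ν => have hν := hν₀.trans hν₀ν
      sub_deriv_mul_div_deriv_pos_of_lt hsc hd h0' hlog (hcrit ν hν).1 (hcrit ν hν).2
        (hτ₀ ▸ hτ hν₀ hν hν₀ν)
  refine ⟨ν₀, hν₀, hanti, hmono, hFν₀, fun ν hν => ?_, hτ₀,
    fun ν hν hνα => hτ.injOn hν hν₀ (hνα.trans hτ₀.symm)⟩
  rcases le_total ν ν₀ with h | h
  · exact hFν₀ ▸ hanti.antitoneOn ⟨hν, h⟩ ⟨hν₀, le_rfl⟩ h
  · exact hFν₀ ▸ hmono.monotoneOn self_mem_Ici h h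

/-- `F(ν) = ν · g(α + max_{w≥0}(w - ν g(w)))` is U-shaped on `(0,∞)`, with minimum
value exactly `α`, attained at the unique `ν` solving `g(w*(ν))/g'(w*(ν)) = α`. -/
theorem stmt6 (g : ℝ → ℝ) (hg : ContDiff ℝ 1 g)
    (hsc : StrictConvexOn ℝ (Set.Ici (0 : ℝ)) g)
    (h0 : g 0 = 0) (h0' : deriv g 0 = 0)
    (hg'inf : Filter.Tendsto (deriv g) Filter.atTop Filter.atTop)
    (hlog : StrictMonoOn (fun w => g w / deriv g w) (Set.Ioi 0))
    (hsuff : Filter.Tendsto (fun w => g (w - g w / deriv g w) / deriv g w)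
      Filter.atTop Filter.atTop)
    (α : ℝ) (hα : 0 < α)
    (wstar : ℝ → ℝ)
    (hmax : ∀ ν : ℝ, 0 < ν → 0 ≤ wstar ν ∧
      IsMaxOn (fun x => x - ν * g x) (Set.Ici 0) (wstar ν))
    (huniq : ∀ ν : ℝ, 0 < ν → ∀ w : ℝ, 0 ≤ w →
      IsMaxOn (fun x => x - ν * g x) (Set.Ici 0) w → w = wstar ν)
    (F : ℝ → ℝ)
    (hF : ∀ ν : ℝ, 0 < ν → F ν = ν * g (α + (wstar ν - ν * g (wstar ν)))) :
    ∃ ν₀ : ℝ, 0 < ν₀ ∧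
      StrictAntiOn F (Set.Ioc 0 ν₀) ∧ StrictMonoOn F (Set.Ici ν₀) ∧
      F ν₀ = α ∧ (∀ ν : ℝ, 0 < ν → α ≤ F ν) ∧
      g (wstar ν₀) / deriv g (wstar ν₀) = α ∧
      (∀ ν : ℝ, 0 < ν → g (wstar ν) / deriv g (wstar ν) = α → ν = ν₀) :=
  stmt6_general g hg hsc h0 h0' hg'inf hlog hsuff α hα wstar hmax F hF
end

section
/- Under the assumptions of the previous statement (g continuously differentiable, strictly convex, strictly log-concave, g(0)=g'(0)=0, g'→∞, and lim_{w→∞} g(w - g(w)/g'(w))/g'(w) = ∞), for any constants α > 0 and C > 1, the equation ν · g(α + max_{w≥0}(w - ν g(w))) = αC has exactly two solutions in ν ∈ (0,∞). -/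
/-!
Let `w(ν)` be the maximiser of `x ↦ x - ν g x` and `G = g / g'`. The first-order condition
`ν g'(w(ν)) = 1` makes `w` a continuous decreasing bijection of `(0, ∞)`, and the envelope
theorem gives `M'(ν) = -g(w(ν))` for `M(ν) = w(ν) - ν g(w(ν))`. Hence, with `A = α + M(ν)`,
`F'(ν) = g'(A) (G(A) - G(w(ν)))` and `A - w(ν) = α - G(w(ν))`, so by strict monotonicity of `G`
the derivative `F'(ν)` has the sign of `α - G(w(ν))`. Since `G(w) ≤ w` and `G → ∞`, there is a
`w₀` with `G(w₀) = α`; then `F` decreases on `(0, ν₀]` and increases on `[ν₀, ∞)` for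
`ν₀ = 1 / g'(w₀)`, with `F(ν₀) = G(w₀) = α < αC`. Finally `F(ν) ≥ ν g(α)` and
`F(ν) ≥ g(w - G(w)) / g'(w)` at `w = w(ν)`, so `F → ∞` at both ends of `(0, ∞)`, and each monotone
branch takes the value `αC` exactly once.
-/

open Set Filter Topology Asymptotics

theorem ConvexOn.add_deriv_mul_sub_le {f : ℝ → ℝ} {S : Set ℝ} {x y : ℝ} (hf : ConvexOn ℝ S f)
    (hx : x ∈ S) (hy : y ∈ S) (hd : DifferentiableAt ℝ f x) :
    f x + deriv f x * (y - x) ≤ f y := by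
  rcases lt_trichotomy x y with hxy | rfl | hxy
  · have := hf.deriv_le_slope hx hy hxy hd
    rw [slope_def_field, le_div_iff₀ (sub_pos.2 hxy)] at this
    linarith
  · simp
  · have := hf.slope_le_deriv hy hx hxy hd
    rw [slope_def_field, div_le_iff₀ (sub_pos.2 hxy)] at this
    linarith

theorem exists_pos_eq_of_tendsto_atTop {f : ℝ → ℝ} {y : ℝ} (hf : Continuous f) (hy : f 0 < y)
    (htop : Tendsto f atTop atTop) : ∃ x, 0 < x ∧ f x = y := by
  obtain ⟨b, hby, hb⟩ := ((htop.eventually_gt_atTop y).and (eventually_gt_atTop 0)).exists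
  obtain ⟨x, hx, hfx⟩ := intermediate_value_Ioo hb.le hf.continuousOn ⟨hy, hby⟩
  exact ⟨x, hx.1, hfx⟩

theorem exists_pos_eq_of_le_self {f : ℝ → ℝ} {y : ℝ} (hf : ContinuousOn f (Ioi 0))
    (hle : ∀ x, 0 < x → f x ≤ x) (htop : Tendsto f atTop atTop) (hy : 0 < y) :
    ∃ x, 0 < x ∧ f x = y := by
  obtain ⟨b, hby, hb⟩ := ((htop.eventually_gt_atTop y).and (eventually_gt_atTop (y / 2))).exists
  have hsmall : f (y / 2) < y := (hle _ (half_pos hy)).trans_lt (half_lt_self hy)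
  obtain ⟨x, hx, hfx⟩ := intermediate_value_Ioo hb.le
    (hf.mono fun x hx => (half_pos hy).trans_le hx.1) ⟨hsmall, hby⟩
  exact ⟨x, (half_pos hy).trans hx.1, hfx⟩

theorem hasDerivAt_of_sub_mul_le {M h : ℝ → ℝ} {x : ℝ} (hh : ContinuousAt h x)
    (hM : ∀ᶠ y in 𝓝 x, (y - x) * h x ≤ M y - M x ∧ M y - M x ≤ (y - x) * h y) :
    HasDerivAt M (h x) x := by
  rw [hasDerivAt_iff_isLittleO]
  have hsmall : (fun y => (y - x) * (h y - h x)) =o[𝓝 x] fun y => y - x := by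
    simpa using (isBigO_refl (fun y => y - x) (𝓝 x)).mul_isLittleO
      ((isLittleO_one_iff ℝ).2 (tendsto_sub_nhds_zero_iff.2 hh))
  refine IsBigO.trans_isLittleO (IsBigO.of_bound 1 ?_) hsmall
  filter_upwards [hM] with y ⟨hlow, hup⟩
  rw [one_mul, Real.norm_eq_abs, Real.norm_eq_abs, smul_eq_mul]
  exact abs_le_abs_of_nonneg (by linarith) (by linarith)

theorem hasDerivAt_sub_mul_of_isMaxOn {g w : ℝ → ℝ} {s : Set ℝ} {ν : ℝ}
    (hmax : ∀ᶠ μ in 𝓝 ν, w μ ∈ s ∧ IsMaxOn (fun x => x - μ * g x) s (w μ))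
    (hc : ContinuousAt (fun μ => g (w μ)) ν) :
    HasDerivAt (fun μ => w μ - μ * g (w μ)) (-g (w ν)) ν := by
  obtain ⟨hνs, hνmax⟩ := hmax.self_of_nhds
  refine hasDerivAt_of_sub_mul_le (h := fun μ => -g (w μ)) hc.neg ?_
  filter_upwards [hmax] with μ ⟨hμs, hμmax⟩
  have h1 : w ν - μ * g (w ν) ≤ w μ - μ * g (w μ) := hμmax hνs
  have h2 : w μ - ν * g (w μ) ≤ w ν - ν * g (w ν) := hνmax hμs
  constructor
  · linear_combination h1
  · linear_combination h2

theorem strictAntiOn_Ioc_and_strictMonoOn_Ici_of_deriv {f : ℝ → ℝ} {a b : ℝ} (hab : a < b)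
    (hf : ContinuousOn f (Ioi a)) (hneg : ∀ x, a < x → x < b → deriv f x < 0)
    (hpos : ∀ x, b < x → 0 < deriv f x) : StrictAntiOn f (Ioc a b) ∧ StrictMonoOn f (Ici b) :=
  ⟨strictAntiOn_of_deriv_neg (convex_Ioc a b) (hf.mono Ioc_subset_Ioi_self) fun x hx => by
      rw [interior_Ioc] at hx; exact hneg x hx.1 hx.2,
    strictMonoOn_of_deriv_pos (convex_Ici b) (hf.mono (Ici_subset_Ioi.2 hab)) fun x hx => by
      rw [interior_Ici] at hx; exact hpos x hx⟩

theorem exists_eq_and_eq_of_strictAntiOn_of_strictMonoOn {f : ℝ → ℝ} {a b c : ℝ} (hab : a < b)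
    (hf : ContinuousOn f (Ioi a)) (hanti : StrictAntiOn f (Ioc a b))
    (hmono : StrictMonoOn f (Ici b)) (hbc : f b < c) (hleft : Tendsto f (𝓝[>] a) atTop)
    (hright : Tendsto f atTop atTop) :
    ∃ x₁ x₂, a < x₁ ∧ x₁ < x₂ ∧ f x₁ = c ∧ f x₂ = c ∧
      ∀ x, a < x → f x = c → x = x₁ ∨ x = x₂ := by
  obtain ⟨s, hsc, has, hsb⟩ :=
    ((hleft.eventually_gt_atTop c).and (Ioo_mem_nhdsGT hab)).exists
  obtain ⟨t, htc, hbt⟩ := ((hright.eventually_gt_atTop c).and (eventually_gt_atTop b)).exists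
  obtain ⟨x₁, hx₁, hfx₁⟩ := intermediate_value_Ioo' hsb.le
    (hf.mono fun x hx => has.trans_le hx.1) ⟨hbc, hsc⟩
  obtain ⟨x₂, hx₂, hfx₂⟩ := intermediate_value_Ioo hbt.le
    (hf.mono fun x hx => hab.trans_le hx.1) ⟨hbc, htc⟩
  refine ⟨x₁, x₂, has.trans hx₁.1, hx₁.2.trans hx₂.1, hfx₁, hfx₂, fun x hx hfx => ?_⟩
  rcases le_or_gt x b with hxb | hbx
  · exact .inl (hanti.injOn ⟨hx, hxb⟩ ⟨has.trans hx₁.1, hx₁.2.le⟩ (hfx.trans hfx₁.symm))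
  · exact .inr (hmono.injOn hbx.le hx₂.1.le (hfx.trans hfx₂.symm))

section MulEqOne

variable {φ w : ℝ → ℝ}

theorem apply_inv_eq_of_mul_eq_one (hφ : StrictMonoOn φ (Ioi 0))
    (hw : ∀ ν, 0 < ν → 0 < w ν ∧ ν * φ (w ν) = 1) {x : ℝ} (hx : 0 < x) (hφx : 0 < φ x) :
    w (φ x)⁻¹ = x := by
  obtain ⟨hpos, heq⟩ := hw _ (inv_pos.2 hφx)
  exact hφ.injOn hpos hx ((inv_mul_eq_one₀ hφx.ne').1 heq).symm

theorem strictAntiOn_of_mul_eq_one (hφ : StrictMonoOn φ (Ioi 0))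
    (hw : ∀ ν, 0 < ν → 0 < w ν ∧ ν * φ (w ν) = 1) : StrictAntiOn w (Ioi 0) := by
  intro a ha b hb hab
  obtain ⟨hwa, hφa⟩ := hw a ha
  obtain ⟨hwb, hφb⟩ := hw b hb
  refine (hφ.lt_iff_lt hwb hwa).1 ?_
  rw [eq_inv_of_mul_eq_one_right hφa, eq_inv_of_mul_eq_one_right hφb]
  exact (inv_lt_inv₀ hb ha).2 hab

theorem continuousOn_of_mul_eq_one (hφ : StrictMonoOn φ (Ioi 0)) (hφpos : ∀ x, 0 < x → 0 < φ x)
    (hw : ∀ ν, 0 < ν → 0 < w ν ∧ ν * φ (w ν) = 1) : ContinuousOn w (Ioi 0) := by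
  intro ν hν
  have himage : Iio 0 ⊆ (fun ν => -w ν) '' Ioi 0 := fun y hy =>
    have hy' : 0 < -y := neg_pos.2 hy
    ⟨(φ (-y))⁻¹, inv_pos.2 (hφpos _ hy'),
      by dsimp only; rw [apply_inv_eq_of_mul_eq_one hφ hw hy' (hφpos _ hy'), neg_neg]⟩
  have hneg := (strictAntiOn_of_mul_eq_one hφ hw).neg.continuousAt_of_image_mem_nhds
    (Ioi_mem_nhds hν) (mem_of_superset (Iio_mem_nhds (neg_neg_iff_pos.2 (hw ν hν).1)) himage)
  have hcont : ContinuousAt (fun ν => -(-w ν)) ν := hneg.neg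
  simp only [neg_neg] at hcont
  exact hcont.continuousWithinAt

theorem tendsto_nhdsGT_zero_atTop_of_mul_eq_one (hφ : StrictMonoOn φ (Ioi 0))
    (hφpos : ∀ x, 0 < x → 0 < φ x) (hw : ∀ ν, 0 < ν → 0 < w ν ∧ ν * φ (w ν) = 1) :
    Tendsto w (𝓝[>] 0) atTop := by
  refine tendsto_atTop.2 fun b => ?_
  have hx : 0 < max b 1 := lt_max_of_lt_right one_pos
  have hν : 0 < (φ (max b 1))⁻¹ := inv_pos.2 (hφpos _ hx)
  filter_upwards [Ioo_mem_nhdsGT hν] with ν hν'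
  calc b ≤ max b 1 := le_max_left _ _
    _ = w (φ (max b 1))⁻¹ := (apply_inv_eq_of_mul_eq_one hφ hw hx (hφpos _ hx)).symm
    _ ≤ w ν := (strictAntiOn_of_mul_eq_one hφ hw hν'.1 hν hν'.2).le

end MulEqOne

section Envelope

variable {g w F : ℝ → ℝ} {α : ℝ}

theorem StrictConvexOn.deriv_pos_of_deriv_zero {a : ℝ}
    (hg : StrictConvexOn ℝ (Ici 0) g) (hd : Differentiable ℝ g) (h0' : deriv g 0 = 0)
    (ha : 0 < a) : 0 < deriv g a :=
  h0' ▸ hg.strictMonoOn_deriv (fun x _ => hd x) self_mem_Ici ha.le ha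

theorem StrictConvexOn.strictMonoOn_of_deriv_zero (hg : StrictConvexOn ℝ (Ici 0) g)
    (hd : Differentiable ℝ g) (h0' : deriv g 0 = 0) : StrictMonoOn g (Ici 0) :=
  strictMonoOn_of_deriv_pos (convex_Ici 0) hd.continuous.continuousOn fun x hx =>
    hg.deriv_pos_of_deriv_zero hd h0' (by rwa [interior_Ici] at hx)

noncomputable def divDeriv (g : ℝ → ℝ) (x : ℝ) : ℝ := g x / deriv g x

theorem ConvexOn.divDeriv_le_self {a : ℝ} (hg : ConvexOn ℝ (Ici 0) g)
    (h0 : g 0 = 0) (ha : 0 ≤ a) (hd : DifferentiableAt ℝ g a) (hpos : 0 < deriv g a) :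
    divDeriv g a ≤ a := by
  have := hg.add_deriv_mul_sub_le ha self_mem_Ici hd
  rw [divDeriv, div_le_iff₀ hpos]
  linarith

theorem ConvexOn.isMaxOn_sub_mul_of_mul_deriv_eq_one {ν a : ℝ}
    (hg : ConvexOn ℝ (Ici 0) g) (ha : 0 ≤ a) (hd : DifferentiableAt ℝ g a) (hν : 0 ≤ ν)
    (h : ν * deriv g a = 1) : IsMaxOn (fun x => x - ν * g x) (Ici 0) a := fun x hx => by
  show x - ν * g x ≤ a - ν * g a
  have := mul_le_mul_of_nonneg_left (hg.add_deriv_mul_sub_le ha hx hd) hν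
  linear_combination this + (a - x) * h

theorem ConvexOn.pos_and_mul_deriv_eq_one_of_isMaxOn_unique {ν a : ℝ}
    (hconv : ConvexOn ℝ (Ici 0) g) (hd : Differentiable ℝ g) (hg' : Continuous (deriv g))
    (h0' : deriv g 0 = 0) (htop : Tendsto (deriv g) atTop atTop) (hν : 0 < ν)
    (huniq : ∀ x, 0 ≤ x → IsMaxOn (fun y => y - ν * g y) (Ici 0) x → x = a) :
    0 < a ∧ ν * deriv g a = 1 := by
  obtain ⟨x, hx, hgx⟩ := exists_pos_eq_of_tendsto_atTop hg' (h0' ▸ inv_pos.2 hν) htop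
  have hνx : ν * deriv g x = 1 := by rw [hgx, mul_inv_cancel₀ hν.ne']
  obtain rfl := huniq x hx.le (hconv.isMaxOn_sub_mul_of_mul_deriv_eq_one hx.le (hd x) hν.le hνx)
  exact ⟨hx, hνx⟩

theorem sub_mul_nonneg_of_mul_deriv_eq_one (hconv : ConvexOn ℝ (Ici 0) g) (h0 : g 0 = 0)
    {ν a : ℝ} (ha : 0 ≤ a) (hd : DifferentiableAt ℝ g a) (hν : 0 ≤ ν)
    (h : ν * deriv g a = 1) : 0 ≤ a - ν * g a := by
  have := hconv.isMaxOn_sub_mul_of_mul_deriv_eq_one ha hd hν h self_mem_Ici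
  simpa [h0] using this

theorem mul_eq_divDeriv_of_mul_deriv_eq_one {ν a : ℝ} (h : ν * deriv g a = 1) :
    ν * g a = divDeriv g a := by
  rw [eq_inv_of_mul_eq_one_left h, inv_mul_eq_div, divDeriv]

theorem sub_mul_mul_deriv_pos_and_neg {a ν : ℝ}
    (hG : StrictMonoOn (divDeriv g) (Ioi 0)) (hpos : ∀ x, 0 < x → 0 < deriv g x) (ha : 0 < a)
    (hν : ν * deriv g a = 1) (hA : 0 < α + (a - ν * g a)) :
    (divDeriv g a < α → 0 < g (α + (a - ν * g a)) - ν * g a * deriv g (α + (a - ν * g a))) ∧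
    (α < divDeriv g a → g (α + (a - ν * g a)) - ν * g a * deriv g (α + (a - ν * g a)) < 0) := by
  set A := α + (a - ν * g a)
  have hνg := mul_eq_divDeriv_of_mul_deriv_eq_one (g := g) hν
  have hgA : g A = deriv g A * divDeriv g A := by
    rw [divDeriv, mul_div_cancel₀ _ (hpos A hA).ne']
  -- `A - a = α - G a`, so the bracket below has the sign of `α - G a`
  have hfactor : g A - ν * g a * deriv g A = deriv g A * (divDeriv g A - divDeriv g a) := by
    rw [hgA, hνg]; ring
  rw [hfactor]
  constructor
  · intro hlt
    have haA : a < A := by simp only [A]; linarith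
    exact mul_pos (hpos A hA) (sub_pos.2 (hG ha hA haA))
  · intro hlt
    have hAa : A < a := by simp only [A]; linarith
    exact mul_neg_of_pos_of_neg (hpos A hA) (sub_neg.2 (hG hA ha hAa))

theorem tendsto_divDeriv_atTop (hgmono : MonotoneOn g (Ici 0)) (hconv : ConvexOn ℝ (Ici 0) g)
    (h0 : g 0 = 0) (hd : Differentiable ℝ g) (hpos : ∀ x, 0 < x → 0 < deriv g x)
    (hsuff : Tendsto (fun w => g (w - g w / deriv g w) / deriv g w) atTop atTop) :
    Tendsto (divDeriv g) atTop atTop := by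
  refine tendsto_atTop_mono' _ ?_ hsuff
  filter_upwards [eventually_gt_atTop 0] with x hx
  have hle := hconv.divDeriv_le_self h0 hx.le (hd x) (hpos x hx)
  have hG : 0 ≤ divDeriv g x :=
    div_nonneg (h0 ▸ hgmono self_mem_Ici hx.le hx.le) (hpos x hx).le
  exact div_le_div_of_nonneg_right (hgmono (sub_nonneg.2 hle) hx.le (by linarith))
    (hpos x hx).le

theorem hasDerivAt_mul_apply_add_sub_mul (hd : Differentiable ℝ g) (hconv : ConvexOn ℝ (Ici 0) g)
    (hw : ∀ ν, 0 < ν → 0 < w ν ∧ ν * deriv g (w ν) = 1) (hwc : ContinuousOn w (Ioi 0))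
    (hF : ∀ ν, 0 < ν → F ν = ν * g (α + (w ν - ν * g (w ν)))) {ν : ℝ} (hν : 0 < ν) :
    HasDerivAt F (g (α + (w ν - ν * g (w ν))) -
      ν * g (w ν) * deriv g (α + (w ν - ν * g (w ν)))) ν := by
  have hmax : ∀ᶠ μ in 𝓝 ν, w μ ∈ Ici 0 ∧ IsMaxOn (fun x => x - μ * g x) (Ici 0) (w μ) := by
    filter_upwards [Ioi_mem_nhds hν] with μ hμ
    exact ⟨(hw μ hμ).1.le, hconv.isMaxOn_sub_mul_of_mul_deriv_eq_one (hw μ hμ).1.le (hd _)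
      hμ.le (hw μ hμ).2⟩
  have hM := hasDerivAt_sub_mul_of_isMaxOn hmax
    ((hd _).continuousAt.comp (hwc.continuousAt (Ioi_mem_nhds hν)))
  have hprod : HasDerivAt (fun μ => μ * g (α + (w μ - μ * g (w μ))))
      (1 * g (α + (w ν - ν * g (w ν))) + ν * (deriv g (α + (w ν - ν * g (w ν))) * -g (w ν))) ν :=
    (hasDerivAt_id' ν).mul ((hd _).hasDerivAt.comp ν (hM.const_add α))
  have hFeq : F =ᶠ[𝓝 ν] fun μ => μ * g (α + (w μ - μ * g (w μ))) := by
    filter_upwards [Ioi_mem_nhds hν] with μ hμ using hF μ hμ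
  exact (hprod.congr_of_eventuallyEq hFeq).congr_deriv (by ring)

theorem deriv_pos_and_neg_of_divDeriv_eq (hd : Differentiable ℝ g)
    (hconv : ConvexOn ℝ (Ici 0) g) (h0 : g 0 = 0) (hpos : ∀ x, 0 < x → 0 < deriv g x)
    (hg'mono : StrictMonoOn (deriv g) (Ioi 0)) (hG : StrictMonoOn (divDeriv g) (Ioi 0))
    (hw : ∀ ν, 0 < ν → 0 < w ν ∧ ν * deriv g (w ν) = 1) (hwc : ContinuousOn w (Ioi 0))
    (hF : ∀ ν, 0 < ν → F ν = ν * g (α + (w ν - ν * g (w ν)))) (hα : 0 < α) {w₀ : ℝ}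
    (hw₀ : 0 < w₀) (hGw₀ : divDeriv g w₀ = α) {ν : ℝ} (hν : 0 < ν) :
    ((deriv g w₀)⁻¹ < ν → 0 < deriv F ν) ∧ (ν < (deriv g w₀)⁻¹ → deriv F ν < 0) := by
  have hν₀ : 0 < (deriv g w₀)⁻¹ := inv_pos.2 (hpos w₀ hw₀)
  have hwν₀ : w (deriv g w₀)⁻¹ = w₀ := apply_inv_eq_of_mul_eq_one hg'mono hw hw₀ (hpos w₀ hw₀)
  have hanti := strictAntiOn_of_mul_eq_one hg'mono hw
  obtain ⟨ha, hνa⟩ := hw ν hν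
  have hA : 0 < α + (w ν - ν * g (w ν)) :=
    add_pos_of_pos_of_nonneg hα (sub_mul_nonneg_of_mul_deriv_eq_one hconv h0 ha.le (hd _) hν.le hνa)
  rw [(hasDerivAt_mul_apply_add_sub_mul hd hconv hw hwc hF hν).deriv]
  refine ⟨fun hlt => (sub_mul_mul_deriv_pos_and_neg hG hpos ha hνa hA).1 ?_,
    fun hlt => (sub_mul_mul_deriv_pos_and_neg hG hpos ha hνa hA).2 ?_⟩
  · exact hGw₀ ▸ hG ha hw₀ (hwν₀ ▸ hanti hν₀ hν hlt)
  · exact hGw₀ ▸ hG hw₀ ha (hwν₀ ▸ hanti hν hν₀ hlt)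

theorem apply_inv_deriv_eq_divDeriv (hg'mono : StrictMonoOn (deriv g) (Ioi 0))
    (hw : ∀ ν, 0 < ν → 0 < w ν ∧ ν * deriv g (w ν) = 1)
    (hF : ∀ ν, 0 < ν → F ν = ν * g (α + (w ν - ν * g (w ν)))) {w₀ : ℝ} (hw₀ : 0 < w₀)
    (hpos : 0 < deriv g w₀) (hGw₀ : divDeriv g w₀ = α) : F (deriv g w₀)⁻¹ = α := by
  have hG : (deriv g w₀)⁻¹ * g w₀ = α := by rw [inv_mul_eq_div, ← hGw₀, divDeriv]
  rw [hF _ (inv_pos.2 hpos), apply_inv_eq_of_mul_eq_one hg'mono hw hw₀ hpos, hG,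
    add_sub_cancel, hG]

theorem tendsto_atTop_atTop_of_mul_deriv_eq_one (hgmono : MonotoneOn g (Ici 0))
    (hconv : ConvexOn ℝ (Ici 0) g) (h0 : g 0 = 0) (hd : Differentiable ℝ g) (hα : 0 < α)
    (hgα : 0 < g α) (hw : ∀ ν, 0 < ν → 0 < w ν ∧ ν * deriv g (w ν) = 1)
    (hF : ∀ ν, 0 < ν → F ν = ν * g (α + (w ν - ν * g (w ν)))) : Tendsto F atTop atTop := by
  refine tendsto_atTop_mono' _ ?_ (tendsto_id.atTop_mul_const hgα)
  filter_upwards [eventually_gt_atTop 0] with ν hν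
  obtain ⟨ha, hνa⟩ := hw ν hν
  have hM := sub_mul_nonneg_of_mul_deriv_eq_one hconv h0 ha.le (hd _) hν.le hνa
  rw [hF ν hν, id]
  have hle : α ≤ α + (w ν - ν * g (w ν)) := le_add_of_nonneg_right hM
  exact mul_le_mul_of_nonneg_left (hgmono hα.le (hα.le.trans hle) hle) hν.le

theorem tendsto_nhdsGT_zero_atTop_of_mul_deriv_eq_one (hgmono : MonotoneOn g (Ici 0))
    (hconv : ConvexOn ℝ (Ici 0) g) (h0 : g 0 = 0) (hd : Differentiable ℝ g) (hα : 0 ≤ α)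
    (hw : ∀ ν, 0 < ν → 0 < w ν ∧ ν * deriv g (w ν) = 1)
    (hF : ∀ ν, 0 < ν → F ν = ν * g (α + (w ν - ν * g (w ν))))
    (hwtop : Tendsto w (𝓝[>] 0) atTop)
    (hsuff : Tendsto (fun w => g (w - g w / deriv g w) / deriv g w) atTop atTop) :
    Tendsto F (𝓝[>] 0) atTop := by
  refine tendsto_atTop_mono' _ ?_ (hsuff.comp hwtop)
  filter_upwards [self_mem_nhdsWithin] with ν hν
  obtain ⟨ha, hνa⟩ := hw ν hν
  have hM := sub_mul_nonneg_of_mul_deriv_eq_one hconv h0 ha.le (hd _) hν.le hνa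
  have hνinv := eq_inv_of_mul_eq_one_left hνa
  rw [Function.comp_apply, div_eq_mul_inv, div_eq_mul_inv, ← hνinv, hF ν hν, mul_comm _ ν,
    mul_comm (g (w ν))]
  exact mul_le_mul_of_nonneg_left (hgmono hM (hM.trans (le_add_of_nonneg_left hα))
    (le_add_of_nonneg_left hα)) hν.le

end Envelope

theorem stmt7_general (g : ℝ → ℝ) (hg : ContDiff ℝ 1 g)
    (hsc : StrictConvexOn ℝ (Set.Ici (0 : ℝ)) g)
    (h0 : g 0 = 0) (h0' : deriv g 0 = 0)
    (hg'inf : Filter.Tendsto (deriv g) Filter.atTop Filter.atTop)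
    (hlog : StrictMonoOn (fun w => g w / deriv g w) (Set.Ioi 0))
    (hsuff : Filter.Tendsto (fun w => g (w - g w / deriv g w) / deriv g w)
      Filter.atTop Filter.atTop)
    (α C : ℝ) (hα : 0 < α) (hC : 1 < C)
    (wstar : ℝ → ℝ)
    (huniq : ∀ ν : ℝ, 0 < ν → ∀ w : ℝ, 0 ≤ w →
      IsMaxOn (fun x => x - ν * g x) (Set.Ici 0) w → w = wstar ν)
    (F : ℝ → ℝ)
    (hF : ∀ ν : ℝ, 0 < ν → F ν = ν * g (α + (wstar ν - ν * g (wstar ν)))) :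
    ∃ ν₁ ν₂ : ℝ, 0 < ν₁ ∧ ν₁ < ν₂ ∧ F ν₁ = α * C ∧ F ν₂ = α * C ∧
      ∀ ν : ℝ, 0 < ν → F ν = α * C → ν = ν₁ ∨ ν = ν₂ := by
  have hd : Differentiable ℝ g := hg.differentiable one_ne_zero
  have hg' : Continuous (deriv g) := hg.continuous_deriv le_rfl
  have hconv := hsc.convexOn
  have hpos : ∀ x, 0 < x → 0 < deriv g x := fun x hx => hsc.deriv_pos_of_deriv_zero hd h0' hx
  have hg'mono : StrictMonoOn (deriv g) (Ioi 0) :=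
    (hsc.strictMonoOn_deriv fun x _ => hd x).mono Ioi_subset_Ici_self
  have hgmono := hsc.strictMonoOn_of_deriv_zero hd h0'
  have hw : ∀ ν, 0 < ν → 0 < wstar ν ∧ ν * deriv g (wstar ν) = 1 := fun ν hν =>
    hconv.pos_and_mul_deriv_eq_one_of_isMaxOn_unique hd hg' h0' hg'inf hν (huniq ν hν)
  have hwc := continuousOn_of_mul_eq_one hg'mono hpos hw
  obtain ⟨w₀, hw₀, hGw₀⟩ := exists_pos_eq_of_le_self
    (hd.continuous.continuousOn.div hg'.continuousOn fun x hx => (hpos x hx).ne')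
    (fun x hx => hconv.divDeriv_le_self h0 hx.le (hd x) (hpos x hx))
    (tendsto_divDeriv_atTop hgmono.monotoneOn hconv h0 hd hpos hsuff) hα
  have hν₀ : 0 < (deriv g w₀)⁻¹ := inv_pos.2 (hpos w₀ hw₀)
  have hsign := fun ν (hν : 0 < ν) =>
    deriv_pos_and_neg_of_divDeriv_eq hd hconv h0 hpos hg'mono hlog hw hwc hF hα hw₀ hGw₀ hν
  have hcont : ContinuousOn F (Ioi 0) := fun ν hν =>
    (hasDerivAt_mul_apply_add_sub_mul hd hconv hw hwc hF hν).continuousAt.continuousWithinAt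
  obtain ⟨hanti, hmono⟩ := strictAntiOn_Ioc_and_strictMonoOn_Ici_of_deriv hν₀ hcont
    (fun ν hν hlt => (hsign ν hν).2 hlt) (fun ν hlt => (hsign ν (hν₀.trans hlt)).1 hlt)
  refine exists_eq_and_eq_of_strictAntiOn_of_strictMonoOn hν₀ hcont hanti hmono ?_ ?_ ?_
  · rw [apply_inv_deriv_eq_divDeriv hg'mono hw hF hw₀ (hpos w₀ hw₀) hGw₀]
    exact lt_mul_of_one_lt_right hα hC
  · exact tendsto_nhdsGT_zero_atTop_of_mul_deriv_eq_one hgmono.monotoneOn hconv h0 hd hα.le hw hF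
      (tendsto_nhdsGT_zero_atTop_of_mul_eq_one hg'mono hpos hw) hsuff
  · exact tendsto_atTop_atTop_of_mul_deriv_eq_one hgmono.monotoneOn hconv h0 hd hα
      (h0 ▸ hgmono self_mem_Ici hα.le hα) hw hF

/-- The equation `ν · g(α + max_{w≥0}(w - ν g(w))) = αC` has exactly two
solutions in `ν ∈ (0,∞)` when `C > 1`. -/
theorem stmt7 (g : ℝ → ℝ) (hg : ContDiff ℝ 1 g)
    (hsc : StrictConvexOn ℝ (Set.Ici (0 : ℝ)) g)
    (h0 : g 0 = 0) (h0' : deriv g 0 = 0)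
    (hg'inf : Filter.Tendsto (deriv g) Filter.atTop Filter.atTop)
    (hlog : StrictMonoOn (fun w => g w / deriv g w) (Set.Ioi 0))
    (hsuff : Filter.Tendsto (fun w => g (w - g w / deriv g w) / deriv g w)
      Filter.atTop Filter.atTop)
    (α C : ℝ) (hα : 0 < α) (hC : 1 < C)
    (wstar : ℝ → ℝ)
    (hmax : ∀ ν : ℝ, 0 < ν → 0 ≤ wstar ν ∧
      IsMaxOn (fun x => x - ν * g x) (Set.Ici 0) (wstar ν))
    (huniq : ∀ ν : ℝ, 0 < ν → ∀ w : ℝ, 0 ≤ w →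
      IsMaxOn (fun x => x - ν * g x) (Set.Ici 0) w → w = wstar ν)
    (F : ℝ → ℝ)
    (hF : ∀ ν : ℝ, 0 < ν → F ν = ν * g (α + (wstar ν - ν * g (wstar ν)))) :
    ∃ ν₁ ν₂ : ℝ, 0 < ν₁ ∧ ν₁ < ν₂ ∧ F ν₁ = α * C ∧ F ν₂ = α * C ∧
      ∀ ν : ℝ, 0 < ν → F ν = α * C → ν = ν₁ ∨ ν = ν₂ :=
  stmt7_general g hg hsc h0 h0' hg'inf hlog hsuff α C hα hC wstar huniq F hF
end

section
/- Let g(w) = w^β with β > 1, α > 0, C > 1, and ν > 0. Then ν · g(α + max_{w≥0}(w - ν g(w))) > αC holds if and only if ν^{-1/(β(β-1))} · (β^{-1/(β-1)} - β^{-β/(β-1)}) · α^{-1/β} + ν^{1/β} · α^{(β-1)/β} > C^{1/β}. -/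
/-!
The concave function `w ↦ w - ν w^β` has its critical point where `ν β w^(β-1) = 1`, i.e. at
`W = (ν β)^(-1/(β-1))`, and the tangent line of `w^β` at `W` (Bernoulli's inequality) shows that
this is the global maximum on `w ≥ 0`, with value `V = W (1 - 1/β)`. Taking `β`-th roots turns
`ν (α + V)^β > α C` into `ν^(1/β) (α + V) > α^(1/β) C^(1/β)`; dividing by `α^(1/β)` and expanding
`ν^(1/β) V` gives the closed form.
-/

open Real

noncomputable def maxSubMulRpow (ν β : ℝ) : ℝ := (ν * β) ^ (-(1 / (β - 1))) * (1 - 1 / β)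

theorem rpow_add_mul_sub_le_rpow {β W w : ℝ} (hβ : 1 ≤ β) (hW : 0 < W) (hw : 0 ≤ w) :
    W ^ β + β * W ^ (β - 1) * (w - W) ≤ w ^ β := by
  have hbern := one_add_mul_self_le_rpow_one_add (s := w / W - 1) (by
    have : 0 ≤ w / W := div_nonneg hw hW.le
    linarith) hβ
  rw [add_sub_cancel, div_rpow hw hW.le, le_div_iff₀ (rpow_pos_of_pos hW β)] at hbern
  calc W ^ β + β * W ^ (β - 1) * (w - W) = (1 + β * (w / W - 1)) * W ^ β := by
        rw [rpow_sub_one hW.ne']; field_simp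
    _ ≤ w ^ β := hbern

theorem isGreatest_sub_mul_rpow {β ν : ℝ} (hβ : 1 < β) (hν : 0 < ν) :
    IsGreatest ((fun w : ℝ => w - ν * w ^ β) '' Set.Ici 0) (maxSubMulRpow ν β) := by
  unfold maxSubMulRpow
  set W := (ν * β) ^ (-(1 / (β - 1)))
  have hνβ : 0 < ν * β := by positivity
  have hW : 0 < W := rpow_pos_of_pos hνβ _
  have hcrit : ν * β * W ^ (β - 1) = 1 := by
    rw [← rpow_mul hνβ.le, show -(1 / (β - 1)) * (β - 1) = -1 by field_simp [sub_ne_zero.2 hβ.ne'],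
      rpow_neg_one, mul_inv_cancel₀ hνβ.ne']
  have hvalue : W - ν * W ^ β = W * (1 - 1 / β) := by
    have : β ≠ 0 := by positivity
    have hsplit : W ^ β = W ^ (β - 1) * W := by
      rw [← rpow_add_one hW.ne', sub_add_cancel]
    rw [hsplit]
    field_simp
    linear_combination -hcrit
  refine ⟨⟨W, hW.le, hvalue⟩, ?_⟩
  rintro _ ⟨w, hw, rfl⟩
  have htangent := rpow_add_mul_sub_le_rpow hβ.le hW hw
  linear_combination ν * htangent - (w - W) * hcrit + hvalue

theorem rpow_one_div_mul_maxSubMulRpow {β ν : ℝ} (hβ : 1 < β) (hν : 0 < ν) :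
    ν ^ (1 / β) * maxSubMulRpow ν β =
      ν ^ (-(1 / (β * (β - 1)))) * (β ^ (-(1 / (β - 1))) - β ^ (-(β / (β - 1)))) := by
  have hβ0 : 0 < β := by linarith
  have hβ1 : β - 1 ≠ 0 := sub_ne_zero.2 hβ.ne'
  have hν_exp : ν ^ (1 / β) * ν ^ (-(1 / (β - 1))) = ν ^ (-(1 / (β * (β - 1)))) := by
    rw [← rpow_add hν]; congr 1; field_simp; ring
  have hβ_exp : β ^ (-(β / (β - 1))) = β ^ (-(1 / (β - 1))) / β := by
    rw [← rpow_sub_one hβ0.ne']; congr 1; field_simp; ring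
  rw [maxSubMulRpow, mul_rpow hν.le hβ0.le, ← hν_exp, hβ_exp]
  ring

theorem lt_mul_rpow_iff {β ν x y : ℝ} (hβ : 0 < β) (hν : 0 ≤ ν) (hx : 0 ≤ x) (hy : 0 ≤ y) :
    y < ν * x ^ β ↔ y ^ (1 / β) < ν ^ (1 / β) * x := by
  rw [← rpow_lt_rpow_iff hy (by positivity) (one_div_pos.2 hβ), mul_rpow hν (rpow_nonneg hx β),
    one_div, rpow_rpow_inv hx hβ.ne']

/-- Closed-form disintermediation condition for power cost functions:
`ν·(α + max_{w≥0}(w - ν w^β))^β > αC` holds iff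
`ν^{-1/(β(β-1))}(β^{-1/(β-1)} - β^{-β/(β-1)})α^{-1/β} + ν^{1/β} α^{(β-1)/β} > C^{1/β}`. -/
theorem stmt9 (β α C ν : ℝ) (hβ : 1 < β) (hα : 0 < α) (hC : 1 < C) (hν : 0 < ν)
    (V : ℝ) (hV : IsGreatest ((fun w : ℝ => w - ν * w ^ β) '' Set.Ici 0) V) :
    ν * (α + V) ^ β > α * C ↔
      ν ^ (-(1 / (β * (β - 1)))) * (β ^ (-(1 / (β - 1))) - β ^ (-(β / (β - 1))))
          * α ^ (-(1 / β)) + ν ^ (1 / β) * α ^ ((β - 1) / β) > C ^ (1 / β) := by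
  have hβ0 : 0 < β := by linarith
  have hV_eq := hV.unique (isGreatest_sub_mul_rpow hβ hν)
  have hV_nonneg : 0 ≤ V := by
    simpa [zero_rpow hβ0.ne'] using hV.2 ⟨0, Set.self_mem_Ici, rfl⟩
  have hα_pow : 0 < α ^ (1 / β) := by positivity
  have hα_exp : α ^ ((β - 1) / β) = α / α ^ (1 / β) := by
    rw [show (β - 1) / β = 1 - 1 / β by field_simp, rpow_sub hα, rpow_one]
  rw [gt_iff_lt, gt_iff_lt, lt_mul_rpow_iff hβ0 hν.le (by positivity) (by positivity),
    mul_rpow hα.le (by positivity), mul_comm, ← lt_div_iff₀ hα_pow,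
    ← rpow_one_div_mul_maxSubMulRpow hβ hν, ← hV_eq, rpow_neg hα.le, hα_exp]
  field_simp
  rw [add_comm α]
end

section
/- Let g(w) = w^β·e^w with β > 1. Then lim_{w → ∞} g(α + w - g(w)/g'(w))/g'(w) ≤ e^α for any α > 0. Consequently, if α > 1 and C > 1 satisfy e^α < αC, then lim_{ν → 0+} ν·g(α + max_{w≥0}(w - ν g(w))) ≤ e^α < αC, so the disintermediation condition fails for all sufficiently small ν > 0. -/
/-!
Write `g w = w ^ β * exp w`. Since `g' / g = 1 + β / w`, the ratio `g / g'` tends to `1`, and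
`g (w + s) / g w = (1 + s / w) ^ β * exp s` tends to `exp c` whenever `s → c`; hence
`g (a + w - g w / g' w) / g' w → exp (a - 1)`.

For the second part let `w₀ ≥ 0` maximise `w - ν g w`, with maximum `V`, and put
`t = ν g w₀ = w₀ - V`. Then
`ν g (α + V) = t exp (α - t) (1 + (α - t) / w₀) ^ β ≤ exp (α - 1) exp (β α / w₀)`, and
`w₀ ≥ V > β α` as soon as `ν g (β α + 1) < 1`, which holds for all small `ν`.
-/

open Real Filter Topology Set

noncomputable def rpowMulExp (β w : ℝ) : ℝ := w ^ β * exp w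

section

variable {β : ℝ}

lemma rpowMulExp_pos {w : ℝ} (hw : 0 < w) : 0 < rpowMulExp β w :=
  mul_pos (rpow_pos_of_pos hw β) (exp_pos w)

lemma rpowMulExp_nonneg {w : ℝ} (hw : 0 ≤ w) : 0 ≤ rpowMulExp β w :=
  mul_nonneg (rpow_nonneg hw β) (exp_pos w).le

lemma rpowMulExp_add_div {w s : ℝ} (hw : 0 < w) (hws : 0 ≤ w + s) :
    rpowMulExp β (w + s) / rpowMulExp β w = (1 + s / w) ^ β * exp s := by
  have hquot : 1 + s / w = (w + s) / w := by field_simp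
  rw [rpowMulExp, rpowMulExp, hquot, div_rpow hws hw.le, exp_add]
  field_simp

lemma tendsto_rpowMulExp_add_div {s : ℝ → ℝ} {c : ℝ} (hs : Tendsto s atTop (𝓝 c)) :
    Tendsto (fun w => rpowMulExp β (w + s w) / rpowMulExp β w) atTop (𝓝 (exp c)) := by
  have hbase : Tendsto (fun w => 1 + s w / w) atTop (𝓝 1) := by
    simpa using tendsto_const_nhds.add (hs.div_atTop tendsto_id)
  have hpow : Tendsto (fun w => (1 + s w / w) ^ β) atTop (𝓝 1) := by
    simpa using hbase.rpow_const (Or.inl one_ne_zero)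
  have hlim : Tendsto (fun w => (1 + s w / w) ^ β * exp (s w)) atTop (𝓝 (exp c)) := by
    simpa using hpow.mul ((continuous_exp.tendsto c).comp hs)
  refine hlim.congr' ?_
  filter_upwards [hs.eventually (eventually_gt_nhds (sub_one_lt c)), eventually_gt_atTop 0,
    eventually_ge_atTop (1 - c)] with w hsw hw hwc
  exact (rpowMulExp_add_div hw (by linarith)).symm

lemma hasDerivAt_rpowMulExp {w : ℝ} (hw : w ≠ 0) :
    HasDerivAt (rpowMulExp β) (rpowMulExp β w * (1 + β / w)) w := by
  show HasDerivAt (fun x => x ^ β * exp x) (w ^ β * exp w * (1 + β / w)) w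
  have h := (hasDerivAt_rpow_const (p := β) (Or.inl hw)).mul (hasDerivAt_exp w)
  refine h.congr_deriv ?_
  rw [rpow_sub_one hw]
  field_simp
  ring

lemma rpowMulExp_div_deriv {w : ℝ} (hw : 0 < w) :
    rpowMulExp β w / deriv (rpowMulExp β) w = (1 + β / w)⁻¹ := by
  rw [(hasDerivAt_rpowMulExp hw.ne').deriv, div_mul_cancel_left₀ (rpowMulExp_pos hw).ne']

lemma tendsto_rpowMulExp_div_deriv :
    Tendsto (fun w => rpowMulExp β w / deriv (rpowMulExp β) w) atTop (𝓝 1) := by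
  have hbase : Tendsto (fun w : ℝ => 1 + β / w) atTop (𝓝 1) := by
    simpa using tendsto_const_nhds.add ((tendsto_const_nhds (x := β)).div_atTop tendsto_id)
  have h : Tendsto (fun w => (1 + β / w)⁻¹) atTop (𝓝 1) := by
    simpa using hbase.inv₀ one_ne_zero
  refine h.congr' ?_
  filter_upwards [eventually_gt_atTop 0] with w hw
  exact (rpowMulExp_div_deriv hw).symm

theorem tendsto_rpowMulExp_add_sub_div_deriv_div_deriv (a : ℝ) :
    Tendsto (fun w => rpowMulExp β (a + w - rpowMulExp β w / deriv (rpowMulExp β) w) /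
      deriv (rpowMulExp β) w) atTop (𝓝 (exp (a - 1))) := by
  have hq := tendsto_rpowMulExp_div_deriv (β := β)
  have h := (tendsto_rpowMulExp_add_div (β := β) (hq.const_sub a)).mul hq
  rw [mul_one] at h
  refine h.congr' ?_
  filter_upwards [eventually_gt_atTop 0] with w hw
  rw [div_mul_div_cancel₀ (rpowMulExp_pos hw).ne', add_sub_assoc', add_comm w a]

lemma one_add_rpow_le_exp_mul {x : ℝ} (hx : -1 ≤ x) (hβ : 0 ≤ β) :
    (1 + x) ^ β ≤ exp (β * x) :=
  calc (1 + x) ^ β ≤ exp x ^ β :=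
        rpow_le_rpow (by linarith) (by linarith [add_one_le_exp x]) hβ
    _ = exp (β * x) := by rw [← exp_mul, mul_comm]

lemma mul_exp_sub_le_exp_sub_one (t α : ℝ) : t * exp (α - t) ≤ exp (α - 1) :=
  calc t * exp (α - t) = exp α * (t * exp (-t)) := by rw [sub_eq_add_neg, exp_add]; ring
    _ ≤ exp α * exp (-1) := by gcongr; exact mul_exp_neg_le_exp_neg_one t
    _ = exp (α - 1) := by rw [← exp_add, sub_eq_add_neg]

lemma mul_rpowMulExp_add_mem_Icc {α ν V : ℝ} (hβ : 0 ≤ β) (hα : 0 ≤ α) (hν : 0 ≤ ν)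
    (hV : IsGreatest ((fun w => w - ν * rpowMulExp β w) '' Ici 0) V)
    (hsmall : ν * rpowMulExp β (β * α + 1) < 1) :
    ν * rpowMulExp β (α + V) ∈ Icc 0 (exp α) := by
  obtain ⟨⟨w₀, hw₀ : 0 ≤ w₀, hV₀⟩, hmax⟩ := hV
  set t := ν * rpowMulExp β w₀
  have hβα₀ := mul_nonneg hβ hα
  have hβα : β * α < V := by
    have hw₁ := hmax ⟨β * α + 1, mem_Ici.2 (by linarith), rfl⟩
    dsimp only at hw₁
    linarith
  have ht : 0 ≤ t := mul_nonneg hν (rpowMulExp_nonneg hw₀)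
  have hw₀pos : 0 < w₀ := by dsimp only at hV₀; linarith
  have hsplit : ν * rpowMulExp β (α + V) = t * exp (α - t) * (1 + (α - t) / w₀) ^ β := by
    rw [show α + V = w₀ + (α - t) by rw [← hV₀]; ring,
      ← div_mul_cancel₀ (rpowMulExp β (w₀ + (α - t))) (rpowMulExp_pos hw₀pos).ne',
      rpowMulExp_add_div hw₀pos (by linarith)]
    ring
  have hbase : -1 ≤ (α - t) / w₀ := by rw [le_div_iff₀ hw₀pos]; linarith
  have hpow : (1 + (α - t) / w₀) ^ β ≤ exp 1 := by
    refine (one_add_rpow_le_exp_mul hbase hβ).trans (exp_le_exp.2 ?_)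
    rw [← mul_div_assoc, div_le_one hw₀pos]
    nlinarith [mul_nonneg hβ ht]
  refine ⟨mul_nonneg hν (rpowMulExp_nonneg (by linarith)), ?_⟩
  calc ν * rpowMulExp β (α + V) = t * exp (α - t) * (1 + (α - t) / w₀) ^ β := hsplit
    _ ≤ exp (α - 1) * exp 1 :=
      mul_le_mul (mul_exp_sub_le_exp_sub_one t α) hpow (rpow_nonneg (by linarith) β)
        (exp_pos _).le
    _ = exp α := by rw [← exp_add, sub_add_cancel]

end

theorem stmt14_general (β α C : ℝ) (hβ : 1 < β) (hα : 1 < α)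
    (hcond : Real.exp α < α * C)
    (g : ℝ → ℝ) (hg : ∀ w : ℝ, g w = w ^ β * Real.exp w)
    (Vf : ℝ → ℝ)
    (hVf : ∀ ν : ℝ, 0 < ν →
      IsGreatest ((fun w : ℝ => w - ν * g w) '' Set.Ici 0) (Vf ν)) :
    (∀ a : ℝ, 0 < a →
      limsup (fun w => g (a + w - g w / deriv g w) / deriv g w) atTop ≤ Real.exp a) ∧
    limsup (fun ν => ν * g (α + Vf ν)) (nhdsWithin 0 (Set.Ioi 0)) ≤ Real.exp α ∧
    ∃ ε : ℝ, 0 < ε ∧ ∀ ν : ℝ, 0 < ν → ν < ε → ν * g (α + Vf ν) < α * C := by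
  obtain rfl : g = rpowMulExp β := funext hg
  have hg₁ : 0 < rpowMulExp β (β * α + 1) := rpowMulExp_pos (by nlinarith)
  have hbound : ∀ ν ∈ Ioo 0 (1 / rpowMulExp β (β * α + 1)),
      ν * rpowMulExp β (α + Vf ν) ∈ Icc 0 (exp α) := fun ν hν =>
    mul_rpowMulExp_add_mem_Icc (by linarith) (by linarith) hν.1.le (hVf ν hν.1)
      ((lt_div_iff₀ hg₁).1 hν.2)
  have hev : ∀ᶠ ν in 𝓝[>] 0, ν * rpowMulExp β (α + Vf ν) ∈ Icc 0 (exp α) :=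
    eventually_of_mem (Ioo_mem_nhdsGT (by positivity)) hbound
  refine ⟨fun a _ => ?_, ?_, _, by positivity,
    fun ν h₀ h₁ => (hbound ν ⟨h₀, h₁⟩).2.trans_lt hcond⟩
  · rw [(tendsto_rpowMulExp_add_sub_div_deriv_div_deriv a).limsup_eq]
    exact exp_le_exp.2 (by linarith)
  · exact limsup_le_of_le (isCoboundedUnder_le_of_eventually_le _ (hev.mono fun _ h => h.1))
      (hev.mono fun _ h => h.2)

/-- For `g(w) = w^β e^w` with `β > 1`:
`limsup_{w→∞} g(a + w - g(w)/g'(w))/g'(w) ≤ e^a` for every `a > 0`; consequently,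
if `α > 1` and `C > 1` satisfy `e^α < αC`, then
`ν · g(α + max_{w≥0}(w - ν g(w))) < αC` for all sufficiently small `ν > 0`. -/
theorem stmt14 (β α C : ℝ) (hβ : 1 < β) (hα : 1 < α) (hC : 1 < C)
    (hcond : Real.exp α < α * C)
    (g : ℝ → ℝ) (hg : ∀ w : ℝ, g w = w ^ β * Real.exp w)
    (Vf : ℝ → ℝ)
    (hVf : ∀ ν : ℝ, 0 < ν →
      IsGreatest ((fun w : ℝ => w - ν * g w) '' Set.Ici 0) (Vf ν)) :
    (∀ a : ℝ, 0 < a →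
      limsup (fun w => g (a + w - g w / deriv g w) / deriv g w) atTop ≤ Real.exp a) ∧
    limsup (fun ν => ν * g (α + Vf ν)) (nhdsWithin 0 (Set.Ioi 0)) ≤ Real.exp α ∧
    ∃ ε : ℝ, 0 < ε ∧ ∀ ν : ℝ, 0 < ν → ν < ε → ν * g (α + Vf ν) < α * C :=
  stmt14_general β α C hβ hα hcond g hg Vf hVf
end

section
/- Let g(w) = w^β with β ≥ 2, fix α > 0 and C ≥ 1. Define ν_bliss by ν_bliss^{-1/(β-1)} = α / ((C^{1/(β-1)} - 1)·β^{-1/(β-1)} + β^{-β/(β-1)}). Then at ν = ν_bliss, the quality α + max_{w≥0}(w - ν g(w)) equals argmax_{w≥0}(C·w - ν·g(w)), and moreover ν_bliss · g(α + max_{w≥0}(w - ν_bliss g(w))) ≤ αC; the latter inequality reduces (after algebraic simplification) to C ≥ 1. -/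
open Real Set

/-!
Write `p = 1/(β-1)`. By convexity of `x ↦ x^β`, `c x - ν x^β` is maximised on `[0, ∞)` at the
stationary point `ν β w^(β-1) = c`, where `ν w^β = c w / β`. For `c = 1` this point is
`w = ν^(-p) β^(-p)`, and for `c = C` it is `C^p w`. Since `β^(-β/(β-1)) = β^(-p) / β`, the
defining equation of `ν` reads `α = w (C^p - 1 + 1/β)`, while `V = w - w/β`; hence
`α + V = C^p w`. Finally `ν (C^p w)^β = C C^p w / β ≤ α C` amounts to
`C w (C^p - 1)(1 - 1/β) ≥ 0`.
-/

lemma IsMaxOn.isGreatest_image {α β : Type*} [Preorder β] {f : α → β} {s : Set α} {a : α}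
    (h : IsMaxOn f s a) (ha : a ∈ s) : IsGreatest (f '' s) (f a) :=
  ⟨mem_image_of_mem f ha, forall_mem_image.2 fun _ hx => h hx⟩

lemma rpow_add_mul_sub_le_rpow_s17 {β x y : ℝ} (hβ : 1 ≤ β) (hx : 0 ≤ x) (hy : 0 < y) :
    y ^ β + β * y ^ (β - 1) * (x - y) ≤ x ^ β := by
  have h := one_add_mul_self_le_rpow_one_add
    (by linarith [div_nonneg hx hy.le] : -1 ≤ x / y - 1) hβ
  rw [add_sub_cancel, div_rpow hx hy.le, le_div_iff₀ (rpow_pos_of_pos hy β)] at h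
  calc y ^ β + β * y ^ (β - 1) * (x - y) = (1 + β * (x / y - 1)) * y ^ β := by
        rw [rpow_sub_one hy.ne']; field_simp
    _ ≤ x ^ β := h

section Stationary

variable {β ν c w : ℝ}

lemma isMaxOn_mul_sub_mul_rpow (hβ : 1 ≤ β) (hν : 0 ≤ ν) (hw : 0 < w)
    (hc : ν * β * w ^ (β - 1) = c) :
    IsMaxOn (fun x => c * x - ν * x ^ β) (Ici 0) w := fun x hx => by
  have := mul_le_mul_of_nonneg_left (rpow_add_mul_sub_le_rpow_s17 hβ hx hw) hν
  show c * x - ν * x ^ β ≤ c * w - ν * w ^ β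
  subst hc
  linear_combination this

lemma mul_mul_rpow_eq_of_mul_mul_rpow_sub_one_eq (hw : 0 < w)
    (hc : ν * β * w ^ (β - 1) = c) : ν * β * w ^ β = c * w := by
  rw [← hc, rpow_sub_one hw.ne']
  field_simp

lemma mul_mul_rpow_sub_one_eq_one (hν : 0 < ν) (hβ : 0 < β) (hβ1 : β - 1 ≠ 0) :
    ν * β * (ν ^ (-(1 / (β - 1))) * β ^ (-(1 / (β - 1)))) ^ (β - 1) = 1 := by
  have hνβ : 0 < ν * β := mul_pos hν hβ
  rw [← mul_rpow hν.le hβ.le, rpow_neg hνβ.le, inv_rpow (rpow_nonneg hνβ.le _), one_div,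
    rpow_inv_rpow hνβ.le hβ1, mul_inv_cancel₀ hνβ.ne']

end Stationary

lemma one_div_rpow_mul_rpow {s w q : ℝ} (hs : 0 ≤ s) (hw : 0 ≤ w) (hq : q ≠ 0) :
    (s ^ (1 / q) * w) ^ q = s * w ^ q := by
  rw [mul_rpow (rpow_nonneg hs _) hw, one_div, rpow_inv_rpow hs hq]

lemma rpow_neg_div_sub_one {β : ℝ} (hβ : 0 < β) (hβ1 : β - 1 ≠ 0) :
    β ^ (-(β / (β - 1))) = β ^ (-(1 / (β - 1))) / β := by
  rw [← rpow_sub_one hβ.ne']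
  congr 1
  field_simp
  ring

theorem stmt17_general (β α C ν : ℝ) (hβ : 2 ≤ β) (hC : 1 ≤ C) (hν0 : 0 < ν)
    (hν : ν ^ (-(1 / (β - 1))) =
      α / ((C ^ (1 / (β - 1)) - 1) * β ^ (-(1 / (β - 1))) + β ^ (-(β / (β - 1)))))
    (V : ℝ) (hV : IsGreatest ((fun w : ℝ => w - ν * w ^ β) '' Set.Ici 0) V) :
    IsMaxOn (fun w : ℝ => C * w - ν * w ^ β) (Set.Ici 0) (α + V) ∧
      ν * (α + V) ^ β ≤ α * C := by
  have hβ1 : β - 1 ≠ 0 := by linarith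
  set p := 1 / (β - 1)
  set w := ν ^ (-p) * β ^ (-p)
  have hw0 : 0 < w := by positivity
  have hw : ν * β * w ^ (β - 1) = 1 := mul_mul_rpow_sub_one_eq_one hν0 (by positivity) hβ1
  have hCp : 1 ≤ C ^ p := one_le_rpow hC (one_div_nonneg.2 (by linarith))
  have hwC : ν * β * (C ^ p * w) ^ (β - 1) = C := by
    rw [one_div_rpow_mul_rpow (by positivity) hw0.le hβ1]
    linear_combination C * hw
  have hα : α = w * (C ^ p - 1 + 1 / β) := by
    rw [rpow_neg_div_sub_one (by positivity) hβ1, eq_div_iff (by positivity)] at hν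
    rw [← hν]
    field_simp
    ring
  have hVw : V = w - ν * w ^ β := by
    have hmax := isMaxOn_mul_sub_mul_rpow (by linarith) hν0.le hw0 hw
    exact hV.unique (by simpa using hmax.isGreatest_image hw0.le)
  have hαV : α + V = C ^ p * w := by
    rw [hVw, hα]
    field_simp
    linear_combination -mul_mul_rpow_eq_of_mul_mul_rpow_sub_one_eq hw0 hw
  refine ⟨hαV ▸ isMaxOn_mul_sub_mul_rpow (by linarith) hν0.le (by positivity) hwC, ?_⟩
  have hval : ν * (C ^ p * w) ^ β = C * C ^ p * w / β := by
    rw [eq_div_iff (by positivity)]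
    linear_combination mul_mul_rpow_eq_of_mul_mul_rpow_sub_one_eq (by positivity) hwC
  have hβinv : 1 / β ≤ 1 := (div_le_one (by positivity)).2 (by linarith)
  rw [hαV, hval, hα]
  linear_combination mul_nonneg (mul_nonneg (by positivity : 0 ≤ C * w)
    (sub_nonneg.2 hCp)) (sub_nonneg.2 hβinv)

/-- Bliss point for power cost functions `g(w) = w^β`, `β ≥ 2`: at the cost level
`ν` defined by `ν^{-1/(β-1)} = α/((C^{1/(β-1)} - 1)β^{-1/(β-1)} + β^{-β/(β-1)})`,
the quality `α + max_{w≥0}(w - ν w^β)` equals `argmax_{w≥0}(C·w - ν w^β)`, and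
`ν·(α + max_{w≥0}(w - ν w^β))^β ≤ αC`. -/
theorem stmt17 (β α C ν : ℝ) (hβ : 2 ≤ β) (hα : 0 < α) (hC : 1 ≤ C) (hν0 : 0 < ν)
    (hν : ν ^ (-(1 / (β - 1))) =
      α / ((C ^ (1 / (β - 1)) - 1) * β ^ (-(1 / (β - 1))) + β ^ (-(β / (β - 1)))))
    (V : ℝ) (hV : IsGreatest ((fun w : ℝ => w - ν * w ^ β) '' Set.Ici 0) V) :
    IsMaxOn (fun w : ℝ => C * w - ν * w ^ β) (Set.Ici 0) (α + V) ∧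
      ν * (α + V) ^ β ≤ α * C :=
  stmt17_general β α C ν hβ hC hν0 hν V hV
end

section
/- Fix β > 1, α ∈ (0,1), and C > 1. An intermediary charging a linear fee α·w' survives the market (i.e., there exists w' ≥ 0 such that both w' ≥ (1-α)^{-1}·max_{w≥0}(w - ν·w^β) and α·w'·C - ν·(w')^β ≥ 0) if and only if α^{1/(β-1)}·(1-α) ≥ C^{-1/(β-1)}·(β^{-1/(β-1)} - β^{-β/(β-1)}). In particular this condition is independent of ν > 0. -/
/-!
Young's inequality shows that the consumer's outside option `max_{w ≥ 0} (w - ν w^β)` equals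
`(νβ)^{-1/(β-1)} (1 - 1/β) = ν^{-1/(β-1)} (β^{-1/(β-1)} - β^{-β/(β-1)})`, so retaining consumers
means `w' ≥ ν^{-1/(β-1)} (β^{-1/(β-1)} - β^{-β/(β-1)}) / (1 - α)`. Profitability
`ν w'^β ≤ α C w'` means `w' ≤ (αC/ν)^{1/(β-1)} = ν^{-1/(β-1)} (αC)^{1/(β-1)}`. A surviving quality
exists iff the lower bound is below the upper one, and the common factor `ν^{-1/(β-1)}` cancels.
-/

open Real Set

namespace LinearFee

variable {β ν : ℝ}

theorem sub_mul_rpow_le (hβ : 1 < β) (hν : 0 < ν) {w : ℝ} (hw : 0 ≤ w) :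
    w - ν * w ^ β ≤ (ν * β) ^ (-(1 / (β - 1))) * (1 - 1 / β) := by
  have hβ0 : 0 < β := by linarith
  have hνβ : 0 < ν * β := by positivity
  have hconj : β.HolderConjugate (β / (β - 1)) :=
    (Real.holderConjugate_iff_eq_conjExponent hβ).2 rfl
  -- Young's inequality for `w = (w (νβ)^{1/β}) · (νβ)^{-1/β}`
  have hyoung := Real.young_inequality_of_nonneg
    (a := w * (ν * β) ^ (1 / β)) (b := (ν * β) ^ (-(1 / β))) (by positivity) (by positivity) hconj
  have hprod : w * (ν * β) ^ (1 / β) * (ν * β) ^ (-(1 / β)) = w := by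
    rw [mul_assoc, ← rpow_add hνβ, add_neg_cancel, rpow_zero, mul_one]
  have hfirst : (w * (ν * β) ^ (1 / β)) ^ β / β = ν * w ^ β := by
    rw [mul_rpow hw (by positivity), ← rpow_mul hνβ.le, one_div_mul_cancel hβ0.ne', rpow_one]
    field_simp
  have hsecond : ((ν * β) ^ (-(1 / β))) ^ (β / (β - 1)) / (β / (β - 1))
      = (ν * β) ^ (-(1 / (β - 1))) * (1 - 1 / β) := by
    rw [← rpow_mul hνβ.le, div_eq_mul_inv _ (β / (β - 1))]
    congr 2 <;> field_simp
  rw [hprod, hfirst, hsecond] at hyoung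
  linarith

theorem isGreatest_image_sub_mul_rpow (hβ : 1 < β) (hν : 0 < ν) :
    IsGreatest ((fun w : ℝ => w - ν * w ^ β) '' Ici 0)
      ((ν * β) ^ (-(1 / (β - 1))) * (1 - 1 / β)) := by
  have hνβ : 0 < ν * β := by positivity
  set w₀ := (ν * β) ^ (-(1 / (β - 1))) with hw₀
  have hw₀_pow : w₀ ^ β = w₀ * (ν * β)⁻¹ := by
    rw [hw₀, ← rpow_mul hνβ.le, ← rpow_neg_one (ν * β), ← rpow_add hνβ]
    congr 1
    field_simp [show β - 1 ≠ 0 by linarith]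
    ring
  refine ⟨⟨w₀, mem_Ici.2 (by positivity), ?_⟩, ?_⟩
  · simp only [hw₀_pow]
    field_simp
  · rintro _ ⟨w, hw, rfl⟩
    exact sub_mul_rpow_le hβ hν hw

theorem mul_rpow_neg_mul_one_sub_inv (hβ : 1 < β) (hν : 0 < ν) :
    (ν * β) ^ (-(1 / (β - 1))) * (1 - 1 / β)
      = ν ^ (-(1 / (β - 1))) * (β ^ (-(1 / (β - 1))) - β ^ (-(β / (β - 1)))) := by
  have hβ0 : 0 < β := by linarith
  have hexp : -(β / (β - 1)) = -(1 / (β - 1)) + -1 := by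
    field_simp [show β - 1 ≠ 0 by linarith]
    ring
  rw [mul_rpow hν.le hβ0.le, hexp, rpow_add hβ0, rpow_neg_one]
  ring

theorem sub_mul_rpow_nonneg_iff (hβ : 1 < β) (hν : 0 < ν) {a w : ℝ} (ha : 0 ≤ a) (hw : 0 < w) :
    0 ≤ a * w - ν * w ^ β ↔ w ≤ (a / ν) ^ (1 / (β - 1)) := by
  have hpow : w ^ β = w ^ (β - 1) * w := by rw [← rpow_add_one hw.ne', sub_add_cancel]
  rw [one_div, le_rpow_inv_iff_of_pos hw.le (by positivity) (by linarith), le_div_iff₀ hν,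
    hpow, sub_nonneg, ← mul_assoc, mul_comm ν, mul_le_mul_iff_of_pos_right hw]

theorem exists_profitable_ge_iff (hβ : 1 < β) (hν : 0 < ν) {a L : ℝ} (ha : 0 ≤ a) (hL : 0 < L) :
    (∃ w, 0 ≤ w ∧ L ≤ w ∧ 0 ≤ a * w - ν * w ^ β) ↔ L ≤ (a / ν) ^ (1 / (β - 1)) := by
  constructor
  · rintro ⟨w, -, hLw, hprofit⟩
    exact hLw.trans ((sub_mul_rpow_nonneg_iff hβ hν ha (hL.trans_le hLw)).1 hprofit)
  · intro hLK
    have hK : 0 < (a / ν) ^ (1 / (β - 1)) := hL.trans_le hLK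
    exact ⟨_, hK.le, hLK, (sub_mul_rpow_nonneg_iff hβ hν ha hK).2 le_rfl⟩

end LinearFee

open LinearFee in
/-- With linear fees `α·w'`, the intermediary survives (there exists a quality
`w' ≥ 0` that both retains consumers and is profitable) if and only if
`α^{1/(β-1)}(1-α) ≥ C^{-1/(β-1)}(β^{-1/(β-1)} - β^{-β/(β-1)})`; in particular the
condition is independent of the production cost `ν`. -/
theorem stmt18 (β α C ν : ℝ) (hβ : 1 < β) (hα0 : 0 < α) (hα1 : α < 1)
    (hC : 1 < C) (hν : 0 < ν)
    (V : ℝ) (hV : IsGreatest ((fun w : ℝ => w - ν * w ^ β) '' Set.Ici 0) V) :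
    (∃ w' : ℝ, 0 ≤ w' ∧ (1 - α)⁻¹ * V ≤ w' ∧ 0 ≤ α * w' * C - ν * w' ^ β) ↔
      C ^ (-(1 / (β - 1))) * (β ^ (-(1 / (β - 1))) - β ^ (-(β / (β - 1))))
        ≤ α ^ (1 / (β - 1)) * (1 - α) := by
  have hC0 : 0 < C := by linarith
  have hα1' : 0 < 1 - α := sub_pos.2 hα1
  obtain rfl := hV.unique (isGreatest_image_sub_mul_rpow hβ hν)
  have hV_pos : 0 < (1 - α)⁻¹ * ((ν * β) ^ (-(1 / (β - 1))) * (1 - 1 / β)) :=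
    mul_pos (inv_pos.2 hα1') (mul_pos (by positivity) (by rw [sub_pos, div_lt_one] <;> linarith))
  have hK : (α * C / ν) ^ (1 / (β - 1))
      = ν ^ (-(1 / (β - 1))) * (C ^ (1 / (β - 1)) * α ^ (1 / (β - 1))) := by
    rw [div_rpow (by positivity) hν.le, mul_rpow hα0.le hC0.le, rpow_neg hν.le]
    ring
  simp_rw [mul_right_comm α _ C]
  rw [exists_profitable_ge_iff hβ hν (by positivity) hV_pos, hK,
    mul_rpow_neg_mul_one_sub_inv hβ hν, mul_left_comm, mul_le_mul_iff_right₀ (by positivity),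
    inv_mul_le_iff₀ hα1', rpow_neg hC0.le, inv_mul_le_iff₀ (by positivity),
    mul_comm (1 - α), mul_assoc]
end
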